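/- arXiv:2101.09622 — 8 statements merged into one kernel-verified Lean document; each statement's English description precedes it below -/
import Mathlib

section
/- With the notation of the previous statement, $\mu_{\mathbb{D}_d}(B(o,r)) = \frac{d}{4^d}\int_0^r e^{-dx}(e^x-1)^{2d-1}(e^x+1)\, dx$ for every $r > 0$. -/
open MeasureTheory intervalIntegral Set

lemma oneD (m : ℕ) (r : ℝ) (hr : 0 < r) :
    ((m + 1 : ℕ) : ℝ) / 4 ^ (m + 1) *
        ∫ x in Set.Ioo (0 : ℝ) r,
          Real.exp (-(((m + 1 : ℕ) : ℝ) * x)) * (Real.exp x - 1) ^ (2 * m + 1) *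
            (Real.exp x + 1) =
      (2 * (m + 1) : ℕ) *
        ∫ s in Set.Ioo (0 : ℝ) ((Real.exp r - 1) / (Real.exp r + 1)),
          s ^ (2 * m + 1) * ((1 - s ^ 2) ^ (m + 1 + 1))⁻¹ := by
  set φ : ℝ → ℝ := fun x => (Real.exp x - 1) / (Real.exp x + 1) with hφ
  set g : ℝ → ℝ := fun s => s ^ (2 * m + 1) * ((1 - s ^ 2) ^ (m + 1 + 1))⁻¹ with hg
  have her : 1 < Real.exp r := by
    have := Real.add_one_le_exp r
    nlinarith [Real.exp_pos r, Real.exp_pos (-r), Real.exp_neg r]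
  have hR0 : (0:ℝ) ≤ (Real.exp r - 1) / (Real.exp r + 1) :=
    div_nonneg (by linarith) (by positivity)
  have hφd : ∀ x : ℝ, HasDerivAt φ (2 * Real.exp x / (Real.exp x + 1) ^ 2) x := by
    intro x
    have h := ((Real.hasDerivAt_exp x).sub_const 1).div ((Real.hasDerivAt_exp x).add_const 1)
      (by positivity)
    exact h.congr_deriv (by ring)
  have hmem : ∀ x : ℝ, 0 < 1 - φ x ^ 2 := by
    intro x
    have he := Real.exp_pos x
    have h1 : φ x < 1 := by
      rw [hφ]; rw [div_lt_one (by positivity)]; linarith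
    have h2 : -1 < φ x := by
      rw [hφ]
      rw [lt_div_iff₀ (by positivity)]
      linarith
    nlinarith
  have hkey : ∀ x : ℝ,
      ((m + 1 : ℕ) : ℝ) / 4 ^ (m + 1) *
        (Real.exp (-(((m + 1 : ℕ) : ℝ) * x)) * (Real.exp x - 1) ^ (2 * m + 1) *
          (Real.exp x + 1)) =
      ((2 * (m + 1) : ℕ) : ℝ) * ((2 * Real.exp x / (Real.exp x + 1) ^ 2) • (g ∘ φ) x) := by
    intro x
    have he := Real.exp_pos x
    have hne : Real.exp x + 1 ≠ 0 := by positivity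
    have hsub : 1 - φ x ^ 2 = 4 * Real.exp x / (Real.exp x + 1) ^ 2 := by
      rw [hφ]; field_simp; ring
    simp only [Function.comp, smul_eq_mul, hg]
    rw [hsub, Real.exp_neg, Real.exp_nat_mul, hφ]
    push_cast
    rw [div_pow, div_pow, mul_pow, ← pow_mul]
    field_simp
    ring
  have hgc : ContinuousOn g (φ '' Set.uIcc 0 r) := by
    apply ContinuousOn.mul ((continuous_pow _).continuousOn)
    apply ContinuousOn.inv₀
    · exact ((continuous_const.sub (continuous_pow 2)).pow _).continuousOn
    · rintro s ⟨x, -, rfl⟩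
      exact pow_ne_zero _ (ne_of_gt (hmem x))
  have hsubst : (∫ x in (0:ℝ)..r, (2 * Real.exp x / (Real.exp x + 1) ^ 2) • (g ∘ φ) x)
      = ∫ s in (φ 0)..(φ r), g s :=
    intervalIntegral.integral_comp_smul_deriv' (fun x _ => hφd x)
      ((continuous_const.mul Real.continuous_exp).continuousOn.div
        (((Real.continuous_exp.add continuous_const).pow 2).continuousOn)
        (fun x _ => by positivity)) hgc
  have hφ0 : φ 0 = 0 := by simp [hφ]
  have hφr : φ r = (Real.exp r - 1) / (Real.exp r + 1) := rfl
  have e1 : ∀ (F : ℝ → ℝ) (b : ℝ), 0 ≤ b → ∫ x in Set.Ioo (0:ℝ) b, F x = ∫ x in (0:ℝ)..b, F x := by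
    intro F b hb
    rw [intervalIntegral.integral_of_le hb, integral_Ioc_eq_integral_Ioo]
  rw [hφ0, hφr] at hsubst
  rw [e1 _ r hr.le, e1 _ _ hR0, ← hsubst, ← intervalIntegral.integral_const_mul,
    ← intervalIntegral.integral_const_mul]
  exact intervalIntegral.integral_congr fun x _ => hkey x

noncomputable instance (d : ℕ) : MeasurableSpace (EuclideanSpace ℂ (Fin d)) := borel _
instance (d : ℕ) : BorelSpace (EuclideanSpace ℂ (Fin d)) := ⟨rfl⟩

/-- The invariant hyperbolic volume measure on the unit ball of `ℂ^d`:
`dμ(z) = (1-|z|²)^{-(d+1)} dv_d(z)`, where `v_d` is Lebesgue measure normalized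
so that the unit ball has measure 1. -/
noncomputable def hypMeasure (d : ℕ) : Measure (EuclideanSpace ℂ (Fin d)) :=
  ((volume (Metric.ball (0 : EuclideanSpace ℂ (Fin d)) 1))⁻¹ •
      (volume : Measure (EuclideanSpace ℂ (Fin d))).restrict
        (Metric.ball (0 : EuclideanSpace ℂ (Fin d)) 1)).withDensity
    (fun z => ENNReal.ofReal ((1 - ‖z‖ ^ 2) ^ (d + 1))⁻¹)


theorem stmt_2 (d : ℕ) (hd : 1 ≤ d) (r : ℝ) (hr : 0 < r) :
    (hypMeasure d
        {z : EuclideanSpace ℂ (Fin d) |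
          Real.log ((1 + ‖z‖) / (1 - ‖z‖)) < r}).toReal =
      (d / 4 ^ d) *
        ∫ x in Set.Ioo (0 : ℝ) r,
          Real.exp (-(d * x)) * (Real.exp x - 1) ^ (2 * d - 1) * (Real.exp x + 1) := by
  obtain ⟨m, rfl⟩ : ∃ m, d = m + 1 := ⟨d - 1, by omega⟩
  have her : 1 < Real.exp r := by nlinarith [Real.add_one_le_exp r]
  set R := (Real.exp r - 1) / (Real.exp r + 1) with hRdef
  have hR0 : 0 < R := div_pos (by linarith) (by positivity)
  have hR1 : R < 1 := by rw [hRdef, div_lt_one (by positivity)]; linarith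
  set S : Set (EuclideanSpace ℂ (Fin (m + 1))) :=
    {z | Real.log ((1 + ‖z‖) / (1 - ‖z‖)) < r} with hSdef
  have hSmeas : MeasurableSet S := by
    have hm : Measurable fun z : EuclideanSpace ℂ (Fin (m + 1)) =>
        Real.log ((1 + ‖z‖) / (1 - ‖z‖)) :=
      Real.measurable_log.comp
        (((continuous_const.add continuous_norm).measurable).div
          ((continuous_const.sub continuous_norm).measurable))
    exact measurableSet_lt hm measurable_const
  have hSball : S ∩ Metric.ball 0 1 = Metric.ball (0 : EuclideanSpace ℂ (Fin (m + 1))) R := by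
    ext z
    simp only [Set.mem_inter_iff, hSdef, Set.mem_setOf_eq, Metric.mem_ball, dist_zero_right]
    have h0 : 0 ≤ ‖z‖ := norm_nonneg z
    constructor
    · rintro ⟨hlog, hz1⟩
      have hpos : 0 < (1 + ‖z‖) / (1 - ‖z‖) := div_pos (by linarith) (by linarith)
      rw [Real.log_lt_iff_lt_exp hpos, div_lt_iff₀ (by linarith)] at hlog
      rw [hRdef, lt_div_iff₀ (by positivity)]
      nlinarith
    · intro hzR
      have hz1 : ‖z‖ < 1 := lt_trans hzR hR1
      refine ⟨?_, hz1⟩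
      have hpos : 0 < (1 + ‖z‖) / (1 - ‖z‖) := div_pos (by linarith) (by linarith)
      rw [Real.log_lt_iff_lt_exp hpos, div_lt_iff₀ (by linarith)]
      rw [hRdef, lt_div_iff₀ (by positivity)] at hzR
      nlinarith
  set c : ENNReal := volume (Metric.ball (0 : EuclideanSpace ℂ (Fin (m + 1))) 1) with hc
  have hc0 : c ≠ 0 := (Metric.measure_ball_pos volume _ one_pos).ne'
  have hctop : c ≠ ⊤ := measure_ball_lt_top.ne
  set G : ℝ → ℝ := fun s => ((1 - s ^ 2) ^ (m + 1 + 1))⁻¹ with hG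
  have hGnn : ∀ z : EuclideanSpace ℂ (Fin (m + 1)), ‖z‖ < R → 0 ≤ G ‖z‖ := by
    intro z hz
    have h2 : (0:ℝ) < 1 - ‖z‖ ^ 2 := by nlinarith [norm_nonneg z]
    rw [hG]
    positivity
  have hGc : ContinuousOn (fun z : EuclideanSpace ℂ (Fin (m + 1)) => G ‖z‖)
      (Metric.closedBall 0 R) := by
    apply ContinuousOn.inv₀
    · exact ((continuous_const.sub (continuous_norm.pow 2)).pow _).continuousOn
    · intro z hz
      have hzR : ‖z‖ ≤ R := by simpa [dist_zero_right] using hz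
      exact pow_ne_zero _ (by nlinarith [norm_nonneg z])
  have hint : IntegrableOn (fun z : EuclideanSpace ℂ (Fin (m + 1)) => G ‖z‖)
      (Metric.ball (0 : EuclideanSpace ℂ (Fin (m + 1))) R) volume :=
    (hGc.integrableOn_compact (isCompact_closedBall _ _)).mono_set
      Metric.ball_subset_closedBall
  have hnn : 0 ≤ᵐ[volume.restrict (Metric.ball (0 : EuclideanSpace ℂ (Fin (m + 1))) R)]
      fun z => G ‖z‖ := by
    filter_upwards [ae_restrict_mem measurableSet_ball] with z hz
    exact hGnn z (by simpa [dist_zero_right] using hz)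
  have hmeasure : hypMeasure (m + 1) S =
      c⁻¹ * ENNReal.ofReal
        (∫ z in Metric.ball (0 : EuclideanSpace ℂ (Fin (m + 1))) R, G ‖z‖) := by
    rw [hypMeasure, withDensity_apply _ hSmeas, Measure.restrict_smul,
      lintegral_smul_measure, Measure.restrict_restrict hSmeas, hSball,
      ofReal_integral_eq_lintegral_ofReal hint hnn]
    rfl
  have hdim : Module.finrank ℝ (EuclideanSpace ℂ (Fin (m + 1))) = 2 * (m + 1) := by
    rw [← Module.finrank_mul_finrank ℝ ℂ (EuclideanSpace ℂ (Fin (m + 1))),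
      Complex.finrank_real_complex, finrank_euclideanSpace_fin]
  have h2 : 2 * (m + 1) - 1 = 2 * m + 1 := by omega
  have hpolar : ∫ z in Metric.ball (0 : EuclideanSpace ℂ (Fin (m + 1))) R, G ‖z‖ =
      ((2 * (m + 1) : ℕ) : ℝ) * (c.toReal * ∫ s in Set.Ioo (0:ℝ) R, s ^ (2 * m + 1) * G s) := by
    have h1 : ∫ z in Metric.ball (0 : EuclideanSpace ℂ (Fin (m + 1))) R, G ‖z‖ ∂volume =
        ∫ z : EuclideanSpace ℂ (Fin (m + 1)), Set.indicator (Set.Iio R) G ‖z‖ := by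
      rw [← MeasureTheory.integral_indicator measurableSet_ball]
      congr 1
      funext z
      by_cases h : ‖z‖ < R
      · simp [Set.indicator_apply, h, Metric.mem_ball, dist_zero_right]
      · simp [Set.indicator_apply, h, Metric.mem_ball, dist_zero_right]
    rw [h1, integral_fun_norm_addHaar volume (Set.indicator (Set.Iio R) G), hdim, h2]
    have h3 : ∫ y in Set.Ioi (0:ℝ), y ^ (2 * m + 1) • Set.indicator (Set.Iio R) G y =
        ∫ s in Set.Ioo (0:ℝ) R, s ^ (2 * m + 1) * G s := by
      have heq : (fun y : ℝ => y ^ (2 * m + 1) • Set.indicator (Set.Iio R) G y) =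
          Set.indicator (Set.Iio R) (fun y => y ^ (2 * m + 1) * G y) := by
        funext y
        by_cases h : y ∈ Set.Iio R <;> simp [Set.indicator_apply, h]
      rw [heq, MeasureTheory.integral_indicator measurableSet_Iio,
        Measure.restrict_restrict measurableSet_Iio, Set.Iio_inter_Ioi]
    rw [h3, nsmul_eq_mul, smul_eq_mul]
    rfl
  have hInn : 0 ≤ ∫ z in Metric.ball (0 : EuclideanSpace ℂ (Fin (m + 1))) R, G ‖z‖ :=
    setIntegral_nonneg measurableSet_ball fun z hz =>
      hGnn z (by simpa [dist_zero_right] using hz)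
  have hct : c.toReal ≠ 0 := ENNReal.toReal_ne_zero.mpr ⟨hc0, hctop⟩
  rw [hmeasure, ENNReal.toReal_mul, ENNReal.toReal_inv, ENNReal.toReal_ofReal hInn, hpolar]
  simp only [h2]
  rw [oneD m r hr, ← hRdef]
  simp only [hG]
  field_simp
end

section
/- Let $d \geq 1$. Then $\lim_{s \to d^+} (s-d) \int_{\mathbb{D}_d} e^{-s\, d_B(x,o)}\, d\mu_{\mathbb{D}_d}(x) = \frac{d}{4^d}$. -/
open MeasureTheory

open Set Filter Real

section Aux

/-- Bernoulli-type bound: `|(1-t)^(2d-1)(1+t) - 1| ≤ 4dt` on `[0,1]`. -/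
lemma aux_bound (d : ℕ) (hd : 1 ≤ d) {t : ℝ} (h0 : 0 ≤ t) (h1 : t ≤ 1) :
    |(1-t)^(2*d-1)*(1+t) - 1| ≤ 4*d*t := by
  have hdR : (1:ℝ) ≤ d := Nat.one_le_cast.mpr hd
  have hcast : ((2*d-1 : ℕ) : ℝ) = 2*(d:ℝ)-1 := by
    have : (1:ℕ) ≤ 2*d := by omega
    push_cast [Nat.cast_sub this]; ring
  have hb : 1 - (2*(d:ℝ)-1)*t ≤ (1-t)^(2*d-1) := by
    have := one_add_mul_le_pow (by linarith : (-2:ℝ) ≤ -t) (2*d-1)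
    rw [hcast] at this
    have h2 : (1:ℝ) + -t = 1 - t := by ring
    rw [h2] at this
    linarith
  have hu : (1-t)^(2*d-1) ≤ 1 := pow_le_one₀ (by linarith) (by linarith)
  have hb2 : (1 - (2*(d:ℝ)-1)*t) * (1+t) ≤ (1-t)^(2*d-1) * (1+t) :=
    mul_le_mul_of_nonneg_right hb (by linarith)
  rw [abs_le]
  constructor
  · nlinarith [mul_nonneg h0 (sub_nonneg.mpr h1)]
  · nlinarith [mul_nonneg h0 h0]

lemma aux_int_rpow_Ioo {σ : ℝ} (hσ : 0 < σ) : ∫ t in Ioo (0:ℝ) 1, t ^ (σ-1) = 1/σ := by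
  rw [← integral_Ioc_eq_integral_Ioo, ← intervalIntegral.integral_of_le zero_le_one,
    integral_rpow (Or.inl (by linarith))]
  rw [Real.one_rpow, Real.zero_rpow (by linarith : σ - 1 + 1 ≠ 0)]
  rw [show σ - 1 + 1 = σ by ring]
  norm_num

lemma aux_integrableOn_rpow_Ioo {σ : ℝ} (hσ : 0 < σ) :
    IntegrableOn (fun t : ℝ => t ^ (σ-1)) (Ioo (0:ℝ) 1) := by
  have := intervalIntegral.intervalIntegrable_rpow' (a := 0) (b := 1) (r := σ - 1) (by linarith)
  rw [intervalIntegrable_iff_integrableOn_Ioc_of_le zero_le_one] at this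
  exact this.mono_set Ioo_subset_Ioc_self

/-- The key limit: `σ ∫₀¹ t^(σ-1) (1-t)^(2d-1)(1+t) dt → 1` as `σ → 0⁺`. -/
lemma aux_key_limit (d : ℕ) (hd : 1 ≤ d) :
    Tendsto (fun σ : ℝ => σ * ∫ t in Ioo (0:ℝ) 1, t ^ (σ-1) * ((1-t)^(2*d-1)*(1+t)))
      (nhdsWithin 0 (Set.Ioi (0:ℝ))) (nhds 1) := by
  have key : ∀ σ : ℝ, 0 < σ →
      |σ * (∫ t in Ioo (0:ℝ) 1, t ^ (σ-1) * ((1-t)^(2*d-1)*(1+t))) - 1| ≤ 4*d*σ := by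
    intro σ hσ
    have int1 := aux_integrableOn_rpow_Ioo hσ
    have intσ : IntegrableOn (fun t : ℝ => t ^ σ) (Ioo (0:ℝ) 1) := by
      have := aux_integrableOn_rpow_Ioo (show (0:ℝ) < σ + 1 by linarith)
      simpa using this
    have meas2 : AEStronglyMeasurable (fun t : ℝ => t ^ (σ-1) * ((1-t)^(2*d-1)*(1+t) - 1))
        (volume.restrict (Ioo (0:ℝ) 1)) := by
      apply AEStronglyMeasurable.mul
      · exact (by fun_prop : Measurable (fun t : ℝ => t ^ (σ-1))).aestronglyMeasurable
      · exact ((((continuous_const.sub continuous_id).pow _).mul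
          (continuous_const.add continuous_id)).sub continuous_const).aestronglyMeasurable
    have hbd : ∀ᵐ t ∂(volume.restrict (Ioo (0:ℝ) 1)),
        ‖t ^ (σ-1) * ((1-t)^(2*d-1)*(1+t) - 1)‖ ≤ 4*d * t ^ σ := by
      filter_upwards [ae_restrict_mem measurableSet_Ioo] with t ht
      have h0 : 0 < t := ht.1
      have h1 : t ≤ 1 := ht.2.le
      have hpow : (0:ℝ) ≤ t ^ (σ-1) := Real.rpow_nonneg h0.le _
      have hts : t ^ σ = t ^ (σ-1) * t := by
        nth_rewrite 1 [show σ = σ-1+1 by ring]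
        exact Real.rpow_add_one h0.ne' (σ-1)
      rw [norm_mul, Real.norm_of_nonneg hpow, Real.norm_eq_abs]
      calc t ^ (σ-1) * |(1-t)^(2*d-1)*(1+t) - 1|
          ≤ t ^ (σ-1) * (4*d*t) :=
            mul_le_mul_of_nonneg_left (aux_bound d hd h0.le h1) hpow
        _ = 4*d * t ^ σ := by rw [hts]; ring
    have int2 : IntegrableOn (fun t : ℝ => t ^ (σ-1) * ((1-t)^(2*d-1)*(1+t) - 1))
        (Ioo (0:ℝ) 1) := by
      refine Integrable.mono (intσ.const_mul (4*d)) meas2 ?_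
      filter_upwards [hbd, ae_restrict_mem measurableSet_Ioo] with t ht htm
      refine ht.trans ?_
      rw [Real.norm_of_nonneg (mul_nonneg (by positivity) (Real.rpow_nonneg htm.1.le σ))]
    have hsplit : (∫ t in Ioo (0:ℝ) 1, t ^ (σ-1) * ((1-t)^(2*d-1)*(1+t)))
        = (∫ t in Ioo (0:ℝ) 1, t ^ (σ-1))
          + ∫ t in Ioo (0:ℝ) 1, t ^ (σ-1) * ((1-t)^(2*d-1)*(1+t) - 1) := by
      rw [← integral_add int1 int2]
      congr 1; funext t; ring
    have hE : |∫ t in Ioo (0:ℝ) 1, t ^ (σ-1) * ((1-t)^(2*d-1)*(1+t) - 1)| ≤ 4*d := by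
      rw [← Real.norm_eq_abs]
      calc ‖∫ t in Ioo (0:ℝ) 1, t ^ (σ-1) * ((1-t)^(2*d-1)*(1+t) - 1)‖
          ≤ ∫ t in Ioo (0:ℝ) 1, 4*d * t ^ σ :=
            norm_integral_le_of_norm_le (intσ.const_mul (4*d)) hbd
        _ = 4*d * (1/(σ+1)) := by
            rw [integral_const_mul]
            congr 1
            have := aux_int_rpow_Ioo (show (0:ℝ) < σ + 1 by linarith)
            simpa using this
        _ ≤ 4*d := by
            have h1 : (1:ℝ)/(σ+1) ≤ 1 := by
              rw [div_le_one (by linarith)]; linarith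
            have h2 : (0:ℝ) ≤ 4*d := by positivity
            nlinarith
    rw [hsplit, mul_add, aux_int_rpow_Ioo hσ, mul_one_div, div_self hσ.ne',
      add_sub_cancel_left, abs_mul, abs_of_pos hσ]
    calc σ * |∫ t in Ioo (0:ℝ) 1, t ^ (σ-1) * ((1-t)^(2*d-1)*(1+t) - 1)|
        ≤ σ * (4*d) := mul_le_mul_of_nonneg_left hE hσ.le
      _ = 4*d*σ := by ring
  have h0 : Tendsto (fun σ : ℝ =>
      σ * (∫ t in Ioo (0:ℝ) 1, t ^ (σ-1) * ((1-t)^(2*d-1)*(1+t))) - 1)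
      (nhdsWithin 0 (Set.Ioi (0:ℝ))) (nhds 0) := by
    apply squeeze_zero_norm' (a := fun σ => 4*d*σ)
    · filter_upwards [self_mem_nhdsWithin] with σ hσ
      simpa [Real.norm_eq_abs] using key σ hσ
    · have : Tendsto (fun σ : ℝ => 4*(d:ℝ)*σ) (nhdsWithin 0 (Set.Ioi (0:ℝ))) (nhds (4*d*0)) :=
        (tendsto_id.const_mul _).mono_left nhdsWithin_le_nhds
      simpa using this
  have := h0.add_const 1
  simpa using this

lemma aux_pow_eq_exp {x : ℝ} (hx : 0 < x) (n : ℕ) : x ^ n = Real.exp (n * Real.log x) := by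
  rw [← Real.rpow_natCast x n, Real.rpow_def_of_pos hx, mul_comm]

/-- Change of variables `r = (1-t)/(1+t)` in the radial integral. -/
lemma aux_cov (d : ℕ) (hd : 1 ≤ d) (s : ℝ) :
    ∫ r in Ioo (0:ℝ) 1, r^(2*d-1) * ((1-r) ^ (s-(d:ℝ)-1) * (1+r) ^ (-(s+(d:ℝ)+1)))
      = (2:ℝ)^(-(2*(d:ℝ)+1)) *
        ∫ t in Ioo (0:ℝ) 1, t ^ (s-(d:ℝ)-1) * ((1-t)^(2*d-1)*(1+t)) := by
  set f : ℝ → ℝ := fun t => (1-t)/(1+t) with hf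
  set f' : ℝ → ℝ := fun t => -2/(1+t)^2 with hf'
  have hmaps : ∀ t ∈ Ioo (0:ℝ) 1, f t ∈ Ioo (0:ℝ) 1 := by
    intro t ht
    have h1 : (0:ℝ) < 1 + t := by linarith [ht.1]
    constructor
    · exact div_pos (by linarith [ht.2]) h1
    · rw [div_lt_one h1]; linarith [ht.1]
  have hinv : ∀ t ∈ Ioo (0:ℝ) 1, f (f t) = t := by
    intro t ht
    have h1 : (1:ℝ) + t ≠ 0 := by nlinarith [ht.1]
    simp only [hf]
    field_simp
    ring
  have himg : f '' Ioo (0:ℝ) 1 = Ioo (0:ℝ) 1 := by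
    ext y
    constructor
    · rintro ⟨x, hx, rfl⟩; exact hmaps x hx
    · intro hy; exact ⟨f y, hmaps y hy, hinv y hy⟩
  have hderiv : ∀ t ∈ Ioo (0:ℝ) 1, HasDerivWithinAt f (f' t) (Ioo (0:ℝ) 1) t := by
    intro t ht
    have h1 : (1:ℝ) + t ≠ 0 := by nlinarith [ht.1]
    have h := ((hasDerivAt_id t).const_sub 1).div ((hasDerivAt_id t).const_add 1) h1
    have heq : (-1 * (1+t) - (1-t) * 1) / (1+t)^2 = f' t := by
      simp only [hf']; field_simp; ring
    exact (heq ▸ h).hasDerivWithinAt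
  have hinj : InjOn f (Ioo (0:ℝ) 1) := by
    intro a ha b hb h
    rw [← hinv a ha, ← hinv b hb, h]
  have := integral_image_eq_integral_abs_deriv_smul measurableSet_Ioo hderiv hinj
    (fun r => r^(2*d-1) * ((1-r) ^ (s-(d:ℝ)-1) * (1+r) ^ (-(s+(d:ℝ)+1))))
  rw [himg] at this
  rw [this, ← integral_const_mul]
  apply setIntegral_congr_fun measurableSet_Ioo
  intro t ht
  have ht0 : 0 < t := ht.1
  have h1t : 0 < 1 - t := by linarith [ht.2]
  have h1p : 0 < 1 + t := by linarith
  have hft := hmaps t ht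
  have hft0 : 0 < f t := hft.1
  have h1mf : 1 - f t = 2*t/(1+t) := by simp only [hf]; field_simp; ring
  have h1pf : 1 + f t = 2/(1+t) := by simp only [hf]; field_simp; ring
  have hcast : ((2*d-1 : ℕ) : ℝ) = 2*(d:ℝ)-1 := by
    have : (1:ℕ) ≤ 2*d := by omega
    push_cast [Nat.cast_sub this]; ring
  simp only [smul_eq_mul]
  rw [h1mf, h1pf]
  rw [Real.rpow_def_of_pos (by positivity : (0:ℝ) < 2*t/(1+t)),
      Real.rpow_def_of_pos (by positivity : (0:ℝ) < 2/(1+t)),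
      Real.rpow_def_of_pos ht0,
      Real.rpow_def_of_pos (by norm_num : (0:ℝ) < 2),
      Real.log_div (by positivity) h1p.ne', Real.log_div (by norm_num) h1p.ne',
      Real.log_mul (by norm_num) ht0.ne']
  have habs : |f' t| = 2/(1+t)^2 := by
    simp only [hf']
    rw [abs_div, abs_neg]
    rw [abs_of_nonneg (by norm_num : (0:ℝ) ≤ 2), abs_of_nonneg (by positivity)]
  rw [habs]
  have hfpow : (f t)^(2*d-1) = (1-t)^(2*d-1) / (1+t)^(2*d-1) := by
    simp only [hf]; rw [div_pow]
  rw [hfpow]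
  rw [aux_pow_eq_exp h1t (2*d-1), aux_pow_eq_exp h1p (2*d-1), aux_pow_eq_exp h1p 2]
  rw [show (2:ℝ)/Real.exp (((2:ℕ):ℝ) * Real.log (1+t))
      = 2 * Real.exp (-(((2:ℕ):ℝ) * Real.log (1+t))) by
    rw [Real.exp_neg]; ring]
  rw [show Real.exp (((2*d-1:ℕ):ℝ) * Real.log (1-t)) / Real.exp (((2*d-1:ℕ):ℝ) * Real.log (1+t))
      = Real.exp (((2*d-1:ℕ):ℝ) * Real.log (1-t)) * Real.exp (-(((2*d-1:ℕ):ℝ) * Real.log (1+t))) by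
    rw [Real.exp_neg]; ring]
  rw [show (2:ℝ) = Real.exp (Real.log 2) by rw [Real.exp_log]; norm_num]
  rw [show (1:ℝ) + t = Real.exp (Real.log (1+t)) by rw [Real.exp_log h1p]]
  rw [← Real.exp_log ht0]
  simp only [← Real.exp_add, hcast]
  simp only [Real.log_exp]
  rw [Real.exp_log (by norm_num : (0:ℝ) < 2)]
  congr 1
  push_cast
  ring

lemma aux_finrank_E (d : ℕ) : Module.finrank ℝ (EuclideanSpace ℂ (Fin d)) = 2*d := by
  rw [← Module.finrank_mul_finrank ℝ ℂ (EuclideanSpace ℂ (Fin d)), Complex.finrank_real_complex,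
    finrank_euclideanSpace, Fintype.card_fin]

/-- Reduction of the hyperbolic integral to a one-dimensional radial integral. -/
lemma aux_reduction (d : ℕ) (hd : 1 ≤ d) (s : ℝ) :
    ∫ x, Real.exp (-(s * Real.log ((1 + ‖x‖) / (1 - ‖x‖)))) ∂hypMeasure d
      = (2*d : ℝ) * ∫ r in Ioo (0:ℝ) 1,
          r^(2*d-1) * ((1-r) ^ (s-(d:ℝ)-1) * (1+r) ^ (-(s+(d:ℝ)+1))) := by
  have hnt : Nontrivial (EuclideanSpace ℂ (Fin d)) := by
    have h : 0 < Module.finrank ℝ (EuclideanSpace ℂ (Fin d)) := by rw [aux_finrank_E]; omega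
    exact Module.nontrivial_of_finrank_pos h
  set B := Metric.ball (0 : EuclideanSpace ℂ (Fin d)) 1 with hB
  have hc0 : volume B ≠ 0 := (Metric.measure_ball_pos volume 0 one_pos).ne'
  have hcT : volume B ≠ ⊤ := measure_ball_lt_top.ne
  set h : ℝ → ℝ := fun r => ((1-r^2)^(d+1))⁻¹ * Real.exp (-(s * Real.log ((1+r)/(1-r)))) with hh
  have hq : Measurable (fun z : EuclideanSpace ℂ (Fin d) =>
      (((1 - ‖z‖ ^ 2) ^ (d + 1))⁻¹).toNNReal) := by fun_prop
  rw [hypMeasure]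
  rw [show (fun z : EuclideanSpace ℂ (Fin d) => ENNReal.ofReal ((1 - ‖z‖ ^ 2) ^ (d + 1))⁻¹)
      = (fun z => ((((1 - ‖z‖ ^ 2) ^ (d + 1))⁻¹).toNNReal : ENNReal)) from rfl]
  rw [integral_withDensity_eq_integral_smul hq, integral_smul_measure]
  have step1 : ∫ z in B, (((1 - ‖z‖ ^ 2) ^ (d + 1))⁻¹).toNNReal •
      Real.exp (-(s * Real.log ((1 + ‖z‖) / (1 - ‖z‖)))) ∂volume
      = ∫ z : EuclideanSpace ℂ (Fin d), (Set.indicator (Iio (1:ℝ)) h) ‖z‖ ∂volume := by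
    rw [← integral_indicator measurableSet_ball]
    congr 1
    funext z
    by_cases hz : ‖z‖ < 1
    · have hzB : z ∈ B := by rwa [hB, Metric.mem_ball, dist_zero_right]
      rw [Set.indicator_of_mem hzB, Set.indicator_of_mem (by exact hz)]
      have hpos : (0:ℝ) < 1 - ‖z‖^2 := by nlinarith [norm_nonneg z]
      have : (0:ℝ) ≤ ((1 - ‖z‖ ^ 2) ^ (d + 1))⁻¹ := by positivity
      rw [NNReal.smul_def, smul_eq_mul, Real.coe_toNNReal _ this]
    · have hzB : z ∉ B := by rw [hB, Metric.mem_ball, dist_zero_right]; exact hz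
      rw [Set.indicator_of_notMem hzB, Set.indicator_of_notMem (by exact hz)]
  rw [step1, MeasureTheory.integral_fun_norm_addHaar volume (Set.indicator (Iio (1:ℝ)) h),
    aux_finrank_E d]
  have hind : (fun y : ℝ => y ^ (2*d-1) • Set.indicator (Iio (1:ℝ)) h y)
      = Set.indicator (Iio (1:ℝ)) (fun y => y ^ (2*d-1) * h y) := by
    funext y
    by_cases hy : y ∈ Iio (1:ℝ) <;>
      simp [Set.indicator_of_mem, Set.indicator_of_notMem, hy, smul_eq_mul]
  rw [hind, setIntegral_indicator measurableSet_Iio, Set.Ioi_inter_Iio]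
  have step2 : ∫ y in Ioo (0:ℝ) 1, y ^ (2*d-1) * h y
      = ∫ r in Ioo (0:ℝ) 1, r^(2*d-1) * ((1-r) ^ (s-(d:ℝ)-1) * (1+r) ^ (-(s+(d:ℝ)+1))) := by
    apply setIntegral_congr_fun measurableSet_Ioo
    intro r hr
    have h0 : 0 < r := hr.1
    have h1t : 0 < 1 - r := by linarith [hr.2]
    have h1p : 0 < 1 + r := by linarith
    have hsq : 1 - r^2 = (1-r)*(1+r) := by ring
    simp only [hh]
    rw [hsq, mul_pow, Real.log_div h1p.ne' h1t.ne',
      Real.rpow_def_of_pos h1t, Real.rpow_def_of_pos h1p,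
      aux_pow_eq_exp h1t (d+1), aux_pow_eq_exp h1p (d+1), mul_inv,
      ← Real.exp_neg, ← Real.exp_neg]
    simp only [← Real.exp_add]
    congr 2
    push_cast
    ring
  rw [step2]
  rw [ENNReal.toReal_inv, smul_eq_mul, smul_eq_mul, nsmul_eq_mul]
  have hcne : (volume B).toReal ≠ 0 := by
    simp [ENNReal.toReal_ne_zero, hc0, hcT]
  simp only [measureReal_def, ← hB]
  field_simp
  push_cast
  ring

lemma aux_const_eq (d : ℕ) : (2*d : ℝ) * (2:ℝ)^(-(2*(d:ℝ)+1)) = (d:ℝ) / 4^d := by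
  have h1 : (2:ℝ)^(-(2*(d:ℝ)+1)) = ((2:ℝ)^((2*d+1 : ℕ)))⁻¹ := by
    rw [← Real.rpow_natCast 2 (2*d+1), ← Real.rpow_neg (by norm_num)]
    congr 1
    push_cast
    ring
  have h2 : (4:ℝ)^d = 2^(2*d) := by
    rw [show (4:ℝ) = 2^2 by norm_num, ← pow_mul]
  rw [h1, h2, pow_succ]
  have : (2:ℝ)^(2*d) ≠ 0 := by positivity
  field_simp

end Aux

theorem stmt_3 (d : ℕ) (hd : 1 ≤ d) :
    Filter.Tendsto
      (fun s : ℝ => (s - d) *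
        ∫ x, Real.exp (-(s * Real.log ((1 + ‖x‖) / (1 - ‖x‖)))) ∂hypMeasure d)
      (nhdsWithin (d : ℝ) (Set.Ioi (d : ℝ))) (nhds (d / 4 ^ d)) := by
  have hsub : Tendsto (fun s : ℝ => s - d) (nhdsWithin (d:ℝ) (Set.Ioi (d:ℝ)))
      (nhdsWithin 0 (Set.Ioi (0:ℝ))) := by
    apply tendsto_nhdsWithin_of_tendsto_nhds_of_eventually_within
    · have : Tendsto (fun s : ℝ => s - d) (nhds (d:ℝ)) (nhds ((d:ℝ) - d)) :=
        (continuous_id.sub continuous_const).tendsto _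
      rw [sub_self] at this
      exact this.mono_left nhdsWithin_le_nhds
    · filter_upwards [self_mem_nhdsWithin] with x hx
      exact sub_pos.mpr (show (d:ℝ) < x from hx)
  have hcomp := (aux_key_limit d hd).comp hsub
  have heq : (fun s : ℝ => (s - d) *
        ∫ x, Real.exp (-(s * Real.log ((1 + ‖x‖) / (1 - ‖x‖)))) ∂hypMeasure d)
      = fun s : ℝ => ((d:ℝ)/4^d) *
          ((s - d) * ∫ t in Ioo (0:ℝ) 1, t ^ (s-(d:ℝ)-1) * ((1-t)^(2*d-1)*(1+t))) := by
    funext s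
    rw [aux_reduction d hd s, aux_cov d hd s, ← aux_const_eq d]
    ring
  rw [heq]
  have := hcomp.const_mul ((d:ℝ)/4^d)
  simpa [Function.comp] using this
end

section
/- For every integer $d \geq 1$ there exist constants $c_d, C_d > 0$ such that for all $t \in (0,1)$: $\frac{c_d}{(1-t)^d}\log\frac{2}{1-t} \leq \sum_{k=0}^{\infty} (k+1)^{d-1}\log(k+2)\, t^k \leq \frac{C_d}{(1-t)^d}\log\frac{2}{1-t}$. -/
open Real Finset

lemma myPowChoose (m k : ℕ) : ((k:ℝ)+1)^m ≤ (m.factorial : ℝ) * ((k+m).choose m) := by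
  have h : (k+1)^m ≤ m.factorial * ((k+m).choose m) := by
    calc (k+1)^m ≤ (k+1).ascFactorial m := Nat.pow_succ_le_ascFactorial (k+1) m
    _ = m.factorial * ((k+m).choose m) := Nat.ascFactorial_eq_factorial_mul_choose k m
  calc ((k:ℝ)+1)^m = (((k+1)^m : ℕ) : ℝ) := by push_cast; ring
  _ ≤ ((m.factorial * ((k+m).choose m) : ℕ) : ℝ) := by exact_mod_cast h
  _ = (m.factorial : ℝ) * ((k+m).choose m) := by push_cast; ring

lemma mySummable {t : ℝ} (ht0 : 0 < t) (ht1 : t < 1) (m : ℕ) :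
    Summable (fun k : ℕ => ((k:ℝ)+1)^m * t^k) := by
  have hr : ‖t‖ < 1 := by rw [Real.norm_eq_abs, abs_of_pos ht0]; exact ht1
  refine Summable.of_nonneg_of_le (fun k => by positivity) (fun k => ?_)
    ((summable_choose_mul_geometric_of_norm_lt_one m hr).mul_left (m.factorial : ℝ))
  exact mul_le_mul_of_nonneg_right (by simpa [mul_assoc] using myPowChoose m k)
    (by positivity) |>.trans_eq (by ring)

lemma myTsumLe {t : ℝ} (ht0 : 0 < t) (ht1 : t < 1) (m : ℕ) :
    (∑' k : ℕ, ((k:ℝ)+1)^m * t^k) ≤ (m.factorial : ℝ) / (1-t)^(m+1) := by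
  have hr : ‖t‖ < 1 := by rw [Real.norm_eq_abs, abs_of_pos ht0]; exact ht1
  have h1 := hasSum_choose_mul_geometric_of_norm_lt_one (𝕜 := ℝ) m hr
  have h2 : HasSum (fun n : ℕ => (m.factorial : ℝ) * (((n+m).choose m : ℝ) * t^n))
      ((m.factorial : ℝ) * (1/(1-t)^(m+1))) := h1.mul_left _
  calc (∑' k : ℕ, ((k:ℝ)+1)^m * t^k) ≤ ∑' k : ℕ, (m.factorial : ℝ) * (((k+m).choose m : ℝ) * t^k) := by
        refine Summable.tsum_le_tsum (fun k => ?_) (mySummable ht0 ht1 m) h2.summable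
        exact (mul_le_mul_of_nonneg_right (myPowChoose m k) (by positivity)).trans_eq (by ring)
  _ = (m.factorial : ℝ) * (1/(1-t)^(m+1)) := h2.tsum_eq
  _ = (m.factorial : ℝ) / (1-t)^(m+1) := by ring

lemma myLogLe (k : ℕ) : Real.log ((k:ℝ)+2) ≤ (k:ℝ)+1 := by
  have := Real.log_le_sub_one_of_pos (x := (k:ℝ)+2) (by positivity)
  linarith

lemma myMainSummable {t : ℝ} (ht0 : 0 < t) (ht1 : t < 1) (e : ℕ) :
    Summable (fun k : ℕ => ((k:ℝ)+1)^e * Real.log ((k:ℝ)+2) * t^k) := by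
  refine Summable.of_nonneg_of_le (fun k => ?_) (fun k => ?_) (mySummable ht0 ht1 (e+1))
  · have : (0:ℝ) ≤ Real.log ((k:ℝ)+2) := Real.log_nonneg (by push_cast; linarith)
    positivity
  · have h := myLogLe k
    have h1 : (0:ℝ) ≤ ((k:ℝ)+1)^e := by positivity
    calc ((k:ℝ)+1)^e * Real.log ((k:ℝ)+2) * t^k ≤ ((k:ℝ)+1)^e * ((k:ℝ)+1) * t^k := by
          exact mul_le_mul_of_nonneg_right (mul_le_mul_of_nonneg_left h h1) (by positivity)
    _ = ((k:ℝ)+1)^(e+1) * t^k := by ring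
lemma myUpper (e : ℕ) {t : ℝ} (ht0 : 0 < t) (ht1 : t < 1) :
    (∑' k : ℕ, ((k:ℝ)+1)^e * Real.log ((k:ℝ)+2) * t^k) ≤
      (3 * (e+1).factorial : ℝ) / (1-t)^(e+1) * Real.log (2/(1-t)) := by
  set u := 1 - t with hu
  have hu0 : 0 < u := by simp [hu]; linarith
  have hu1 : u < 1 := by simp [hu]; linarith
  set A := Real.log (2/u) with hA
  have hA2 : (1:ℝ)/2 ≤ A := by
    have h1 : (2:ℝ) ≤ 2/u := by
      rw [le_div_iff₀ hu0]; linarith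
    have := Real.log_le_log (by norm_num) h1
    have h2 := Real.log_two_gt_d9
    linarith
  have hA0 : 0 ≤ A := by linarith
  have hS1 := mySummable ht0 ht1 e
  have hS2 := mySummable ht0 ht1 (e+1)
  have hterm : ∀ k : ℕ, ((k:ℝ)+1)^e * Real.log ((k:ℝ)+2) * t^k ≤
      A * (((k:ℝ)+1)^e * t^k) + u * (((k:ℝ)+1)^(e+1) * t^k) := by
    intro k
    have hlog : Real.log ((k:ℝ)+2) ≤ A + ((k:ℝ)+2)*u/2 := by
      have heq : ((k:ℝ)+2) = (2/u) * (((k:ℝ)+2)*u/2) := by field_simp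
      have h2 : Real.log ((k:ℝ)+2) = A + Real.log (((k:ℝ)+2)*u/2) := by
        rw [hA, ← Real.log_mul (by positivity) (by positivity), ← heq]
      have h3 : Real.log (((k:ℝ)+2)*u/2) ≤ ((k:ℝ)+2)*u/2 := by
        have := Real.log_le_sub_one_of_pos (x := ((k:ℝ)+2)*u/2) (by positivity)
        linarith
      linarith
    have hp1 : (0:ℝ) ≤ ((k:ℝ)+1)^e * t^k := by positivity
    calc ((k:ℝ)+1)^e * Real.log ((k:ℝ)+2) * t^k
        ≤ ((k:ℝ)+1)^e * (A + ((k:ℝ)+2)*u/2) * t^k := by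
          apply mul_le_mul_of_nonneg_right _ (by positivity)
          exact mul_le_mul_of_nonneg_left hlog (by positivity)
      _ = A * (((k:ℝ)+1)^e * t^k) + (u/2) * (((k:ℝ)+2) * ((k:ℝ)+1)^e * t^k) := by ring
      _ ≤ A * (((k:ℝ)+1)^e * t^k) + (u/2) * (2*((k:ℝ)+1) * ((k:ℝ)+1)^e * t^k) := by
          have hk2 : ((k:ℝ)+2) ≤ 2*((k:ℝ)+1) := by linarith
          gcongr
      _ = A * (((k:ℝ)+1)^e * t^k) + u * (((k:ℝ)+1)^(e+1) * t^k) := by ring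
  have hsum : (∑' k : ℕ, ((k:ℝ)+1)^e * Real.log ((k:ℝ)+2) * t^k) ≤
      ∑' k : ℕ, (A * (((k:ℝ)+1)^e * t^k) + u * (((k:ℝ)+1)^(e+1) * t^k)) :=
    Summable.tsum_le_tsum hterm (myMainSummable ht0 ht1 e) ((hS1.mul_left A).add (hS2.mul_left u))
  have heq2 : (∑' k : ℕ, (A * (((k:ℝ)+1)^e * t^k) + u * (((k:ℝ)+1)^(e+1) * t^k)))
      = A * (∑' k : ℕ, ((k:ℝ)+1)^e * t^k) + u * (∑' k : ℕ, ((k:ℝ)+1)^(e+1) * t^k) := by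
    rw [Summable.tsum_add (hS1.mul_left A) (hS2.mul_left u), tsum_mul_left, tsum_mul_left]
  have hb1 : A * (∑' k : ℕ, ((k:ℝ)+1)^e * t^k) ≤ A * ((e.factorial : ℝ) / u^(e+1)) :=
    mul_le_mul_of_nonneg_left (myTsumLe ht0 ht1 e) hA0
  have hb2 : u * (∑' k : ℕ, ((k:ℝ)+1)^(e+1) * t^k) ≤ ((e+1).factorial : ℝ) / u^(e+1) := by
    have := mul_le_mul_of_nonneg_left (myTsumLe ht0 ht1 (e+1)) hu0.le
    rw [← hu] at this
    refine this.trans_eq ?_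
    rw [pow_succ]
    field_simp
  have hfle : (e.factorial : ℝ) ≤ ((e+1).factorial : ℝ) := by
    exact_mod_cast Nat.factorial_le (Nat.le_succ e)
  have hP : (0:ℝ) < u^(e+1) := by positivity
  have hf0 : (0:ℝ) < ((e+1).factorial : ℝ) := by positivity
  have hfinal : A * ((e.factorial : ℝ) / u^(e+1)) + ((e+1).factorial : ℝ) / u^(e+1)
      ≤ (3 * (e+1).factorial : ℝ) / u^(e+1) * A := by
    have key : A * (e.factorial:ℝ) + ((e+1).factorial:ℝ) ≤ 3*((e+1).factorial:ℝ) * A := by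
      nlinarith [mul_le_mul_of_nonneg_left hfle hA0]
    calc A * ((e.factorial:ℝ) / u^(e+1)) + ((e+1).factorial:ℝ) / u^(e+1)
        = (A * (e.factorial:ℝ) + ((e+1).factorial:ℝ)) / u^(e+1) := by ring
      _ ≤ (3*((e+1).factorial:ℝ) * A) / u^(e+1) := by gcongr
      _ = (3 * (e+1).factorial : ℝ) / u^(e+1) * A := by ring
  calc (∑' k : ℕ, ((k:ℝ)+1)^e * Real.log ((k:ℝ)+2) * t^k)
      ≤ A * (∑' k : ℕ, ((k:ℝ)+1)^e * t^k) + u * (∑' k : ℕ, ((k:ℝ)+1)^(e+1) * t^k) :=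
        hsum.trans_eq heq2
    _ ≤ A * ((e.factorial : ℝ) / u^(e+1)) + ((e+1).factorial : ℝ) / u^(e+1) :=
        add_le_add hb1 hb2
    _ ≤ (3 * (e+1).factorial : ℝ) / u^(e+1) * A := hfinal
lemma myLower (e : ℕ) {t : ℝ} (ht0 : 0 < t) (ht1 : t < 1) :
    ((1/4:ℝ)^(e+1) / 200) / (1-t)^(e+1) * Real.log (2/(1-t)) ≤
      (∑' k : ℕ, ((k:ℝ)+1)^e * Real.log ((k:ℝ)+2) * t^k) := by
  obtain ⟨u, hut⟩ : ∃ u : ℝ, u = 1 - t := ⟨1 - t, rfl⟩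
  rw [← hut]
  have hu0 : 0 < u := by rw [hut]; linarith
  have hu1 : u < 1 := by rw [hut]; linarith
  have hA0 : 0 ≤ Real.log (2/u) := Real.log_nonneg (by rw [le_div_iff₀ hu0]; linarith)
  have hnn : ∀ k : ℕ, 0 ≤ ((k:ℝ)+1)^e * Real.log ((k:ℝ)+2) * t^k := by
    intro k
    have : (0:ℝ) ≤ Real.log ((k:ℝ)+2) := Real.log_nonneg (by push_cast; linarith)
    positivity
  have hS := myMainSummable ht0 ht1 e
  by_cases hcase : 1/2 < u
  · -- t < 1/2 : use the k = 0 term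
    have h0 : Real.log 2 ≤ ∑' k : ℕ, ((k:ℝ)+1)^e * Real.log ((k:ℝ)+2) * t^k := by
      have := Summable.le_tsum hS 0 (fun j _ => hnn j)
      simpa using this
    have hAle : Real.log (2/u) ≤ Real.log 4 := by
      apply Real.log_le_log (by positivity)
      rw [div_le_iff₀ hu0]; linarith
    have hlog4 : Real.log 4 ≤ 3 := by
      have := Real.log_le_sub_one_of_pos (x := (4:ℝ)) (by norm_num)
      linarith
    have h2 : ((1/4:ℝ)^(e+1) / 200) / u^(e+1) ≤ 1/400 := by
      rw [div_div, div_le_div_iff₀ (by positivity) (by norm_num)]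
      have hhalf : ((1/2:ℝ))^(e+1) ≤ 1/2 := by
        calc ((1/2:ℝ))^(e+1) ≤ (1/2:ℝ)^1 :=
              pow_le_pow_of_le_one (by norm_num) (by norm_num) (by omega)
        _ = 1/2 := by norm_num
      have hp2 : (0:ℝ) < (1/2:ℝ)^(e+1) := by positivity
      have hmono : ((1/2:ℝ))^(e+1) ≤ u^(e+1) := pow_le_pow_left₀ (by norm_num) hcase.le _
      calc (1/4:ℝ)^(e+1) * 400 = (1/2:ℝ)^(e+1) * ((1/2:ℝ)^(e+1) * 400) := by
            rw [show (1/4:ℝ) = (1/2)*(1/2) by norm_num, mul_pow]; ring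
      _ ≤ (1/2:ℝ)^(e+1) * 200 := by nlinarith
      _ ≤ u^(e+1) * 200 := by nlinarith
      _ = 1 * (200 * u^(e+1)) := by ring
    have hlog2 := Real.log_two_gt_d9
    calc ((1/4:ℝ)^(e+1) / 200) / u^(e+1) * Real.log (2/u) ≤ (1/400) * 3 :=
          mul_le_mul h2 (hAle.trans hlog4) hA0 (by norm_num)
    _ ≤ Real.log 2 := by linarith
    _ ≤ _ := h0
  · -- u ≤ 1/2
    push_neg at hcase
    set N := Nat.ceil (1/(4*u)) with hN
    have hN1 : 1 ≤ N := Nat.one_le_iff_ne_zero.mpr (by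
      simp only [hN, ne_eq, Nat.ceil_eq_zero, not_le]
      positivity)
    have hN1' : (1:ℝ) ≤ (N:ℝ) := by exact_mod_cast hN1
    have hNlb : 1/(4*u) ≤ (N:ℝ) := Nat.le_ceil _
    have hNub : (N:ℝ) ≤ 1/(4*u) + 1 := (Nat.ceil_lt_add_one (by positivity)).le
    have h2N : 2*(N:ℝ) ≤ 2/u := by
      have h1u : (2:ℝ) ≤ 1/u := by rw [le_div_iff₀ hu0]; linarith
      have hexp : 1/(4*u) = (1/4) * (1/u) := by ring
      have h2u : 2/u = 2 * (1/u) := by ring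
      linarith
    have hL0 : Real.log t ≤ 0 := Real.log_nonpos ht0.le ht1.le
    have hlogt : -(2*u) ≤ Real.log t := by
      have h := Real.log_le_sub_one_of_pos (x := t⁻¹) (by positivity)
      rw [Real.log_inv] at h
      have h1 : (1:ℝ)/t ≤ 1 + 2*u := by
        rw [div_le_iff₀ ht0]
        nlinarith [mul_nonneg hu0.le (by linarith : (0:ℝ) ≤ 1 - 2*u)]
      have h2 : t⁻¹ ≤ 1 + 2*u := by rw [show t⁻¹ = 1/t by ring]; exact h1
      linarith
    have htN : (1:ℝ)/64 ≤ t^(2*N) := by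
      have hexp4 : Real.exp 4 ≤ 64 := by
        have h := Real.exp_one_lt_d9
        have h4 : Real.exp 4 = Real.exp 1 ^ 4 := by
          rw [← Real.exp_nat_mul]; norm_num
        rw [h4]
        have hp : Real.exp 1 ^ 4 ≤ 2.7182818286 ^ 4 :=
          pow_le_pow_left₀ (Real.exp_pos 1).le h.le 4
        nlinarith
      have e1 : -4 ≤ (2/u) * Real.log t := by
        have hpos : (0:ℝ) < 2/u := by positivity
        have h := mul_le_mul_of_nonneg_left hlogt hpos.le
        have heq : (2/u) * (-(2*u)) = -4 := by field_simp; ring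
        linarith
      have e2 : (2/u) * Real.log t ≤ (2*(N:ℝ)) * Real.log t :=
        mul_le_mul_of_nonpos_right h2N hL0
      have hkey : -4 ≤ (((2*N : ℕ)) : ℝ) * Real.log t := by push_cast; linarith
      have hts : Real.exp ((((2*N : ℕ)) : ℝ) * Real.log t) = t^(2*N) := by
        rw [Real.exp_nat_mul, Real.exp_log ht0]
      calc (1:ℝ)/64 ≤ 1/Real.exp 4 := one_div_le_one_div_of_le (Real.exp_pos 4) hexp4
      _ = Real.exp (-4) := by rw [Real.exp_neg]; ring
      _ ≤ Real.exp ((((2*N : ℕ)) : ℝ) * Real.log t) := Real.exp_le_exp.mpr hkey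
      _ = t^(2*N) := hts
    have hlogN3 : Real.log (2/u) ≤ 3 * Real.log ((N:ℝ)+2) := by
      have hl1 : Real.log (1/(4*u)) ≤ Real.log ((N:ℝ)+2) :=
        Real.log_le_log (by positivity) (by linarith)
      have hl2 : Real.log 8 ≤ 2 * Real.log ((N:ℝ)+2) := by
        have h89 : Real.log 8 ≤ Real.log 9 := Real.log_le_log (by norm_num) (by norm_num)
        have h9 : Real.log 9 = 2 * Real.log 3 := by
          rw [show (9:ℝ) = 3^2 by norm_num, Real.log_pow]; push_cast; ring
        have h3 : Real.log 3 ≤ Real.log ((N:ℝ)+2) :=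
          Real.log_le_log (by norm_num) (by linarith)
        linarith
      have hsplit : Real.log (2/u) = Real.log 8 + Real.log (1/(4*u)) := by
        rw [← Real.log_mul (by norm_num) (by positivity)]
        congr 1
        field_simp
        ring
      linarith
    have hlogNnn : 0 ≤ Real.log ((N:ℝ)+2) := Real.log_nonneg (by linarith)
    have hwin : (N:ℝ) * ((N:ℝ)^e * Real.log ((N:ℝ)+2) * (1/64)) ≤
        ∑ k ∈ Finset.Ico N (2*N), ((k:ℝ)+1)^e * Real.log ((k:ℝ)+2) * t^k := by
      have hcard : (Finset.Ico N (2*N)).card = N := by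
        rw [Nat.card_Ico]; omega
      have hle := Finset.card_nsmul_le_sum (Finset.Ico N (2*N))
        (fun k => ((k:ℝ)+1)^e * Real.log ((k:ℝ)+2) * t^k)
        ((N:ℝ)^e * Real.log ((N:ℝ)+2) * (1/64)) ?_
      · rwa [hcard, nsmul_eq_mul] at hle
      · intro k hk
        rw [Finset.mem_Ico] at hk
        obtain ⟨hk1, hk2⟩ := hk
        have hk1' : (N:ℝ) ≤ (k:ℝ) := by exact_mod_cast hk1
        have hpow : (N:ℝ)^e ≤ ((k:ℝ)+1)^e := pow_le_pow_left₀ (by positivity) (by linarith) e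
        have hlogk : Real.log ((N:ℝ)+2) ≤ Real.log ((k:ℝ)+2) :=
          Real.log_le_log (by positivity) (by linarith)
        have htk : (1:ℝ)/64 ≤ t^k :=
          htN.trans (pow_le_pow_of_le_one ht0.le ht1.le (by omega))
        have hlogknn : 0 ≤ Real.log ((k:ℝ)+2) := by linarith
        have h1 : (N:ℝ)^e * Real.log ((N:ℝ)+2) ≤ ((k:ℝ)+1)^e * Real.log ((k:ℝ)+2) :=
          mul_le_mul hpow hlogk hlogNnn (by positivity)
        exact mul_le_mul h1 htk (by norm_num)
          (mul_nonneg (by positivity) hlogknn)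
    have htsum : ∑ k ∈ Finset.Ico N (2*N), ((k:ℝ)+1)^e * Real.log ((k:ℝ)+2) * t^k ≤
        ∑' k : ℕ, ((k:ℝ)+1)^e * Real.log ((k:ℝ)+2) * t^k :=
      Summable.sum_le_tsum _ (fun k _ => hnn k) hS
    have hfinal : ((1/4:ℝ)^(e+1) / 200) / u^(e+1) * Real.log (2/u) ≤
        (N:ℝ) * ((N:ℝ)^e * Real.log ((N:ℝ)+2) * (1/64)) := by
      have hpowN : ((1/4:ℝ)/u)^(e+1) ≤ (N:ℝ)^(e+1) := by
        apply pow_le_pow_left₀ (by positivity)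
        calc (1/4:ℝ)/u = 1/(4*u) := by ring
        _ ≤ (N:ℝ) := hNlb
      have hNB : (N:ℝ) * ((N:ℝ)^e * Real.log ((N:ℝ)+2) * (1/64)) =
          (N:ℝ)^(e+1) * (Real.log ((N:ℝ)+2) * (1/64)) := by rw [pow_succ]; ring
      have step1 : ((1/4:ℝ)^(e+1) / 200) / u^(e+1) * Real.log (2/u) =
          ((1/4:ℝ)/u)^(e+1) * (Real.log (2/u) * (1/200)) := by
        rw [div_pow (1/4:ℝ) u]; generalize (1/4:ℝ)^(e+1) = a; ring
      rw [hNB, step1]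
      have hA3 : Real.log (2/u) * (1/200) ≤ Real.log ((N:ℝ)+2) * (3/200) := by linarith
      calc ((1/4:ℝ)/u)^(e+1) * (Real.log (2/u) * (1/200))
          ≤ (N:ℝ)^(e+1) * (Real.log ((N:ℝ)+2) * (3/200)) :=
            mul_le_mul hpowN hA3 (mul_nonneg hA0 (by norm_num)) (by positivity)
      _ ≤ (N:ℝ)^(e+1) * (Real.log ((N:ℝ)+2) * (1/64)) := by
            apply mul_le_mul_of_nonneg_left _ (by positivity)
            exact mul_le_mul_of_nonneg_left (by norm_num) hlogNnn
    exact hfinal.trans (hwin.trans htsum)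

theorem stmt_4 (d : ℕ) (hd : 1 ≤ d) :
    ∃ c C : ℝ, 0 < c ∧ 0 < C ∧ ∀ t ∈ Set.Ioo (0 : ℝ) 1,
      c / (1 - t) ^ d * Real.log (2 / (1 - t)) ≤
        (∑' k : ℕ, ((k : ℝ) + 1) ^ (d - 1) * Real.log ((k : ℝ) + 2) * t ^ k) ∧
      (∑' k : ℕ, ((k : ℝ) + 1) ^ (d - 1) * Real.log ((k : ℝ) + 2) * t ^ k) ≤
        C / (1 - t) ^ d * Real.log (2 / (1 - t)) := by
  obtain ⟨e, rfl⟩ : ∃ e, d = e + 1 := ⟨d - 1, by omega⟩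
  refine ⟨(1/4:ℝ)^(e+1)/200, (3 * (e+1).factorial : ℝ), by positivity, by positivity,
    fun t ht => ?_⟩
  obtain ⟨ht0, ht1⟩ := ht
  simp only [Nat.add_sub_cancel]
  exact ⟨myLower e ht0 ht1, myUpper e ht0 ht1⟩
end

section
/- There exist constants $c'' > 0$ such that for all $t\in(0,1)$: $c''\,\log\frac{2}{1-t} \leq (1-t)\sum_{k=0}^{\infty}\log(k+2)\,t^k \leq \log\frac{2}{1-t}$. In particular, the upper bound follows from $(1-t)\sum_{k=0}^\infty \log(k+2)t^k = \sum_{k=0}^\infty \log(1+\frac{1}{k+1})t^k \le \log 2 + \sum_{k=1}^\infty \frac{t^k}{k}$. -/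
open Real

theorem stmt_5 :
    ∃ c'' : ℝ, 0 < c'' ∧ ∀ t ∈ Set.Ioo (0 : ℝ) 1,
      c'' * Real.log (2 / (1 - t)) ≤
        (1 - t) * (∑' k : ℕ, Real.log ((k : ℝ) + 2) * t ^ k) ∧
      (1 - t) * (∑' k : ℕ, Real.log ((k : ℝ) + 2) * t ^ k) ≤
        Real.log (2 / (1 - t)) := by
  refine ⟨1/3, by norm_num, fun t ht => ?_⟩
  obtain ⟨ht0, ht1⟩ := ht
  have h1t : (0:ℝ) < 1 - t := by linarith
  have habs : |t| < 1 := by rw [abs_of_pos ht0]; linarith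
  -- summability
  have hsum_a : Summable (fun k : ℕ => Real.log ((k:ℝ)+2) * t^k) := by
    have h1 : Summable (fun k : ℕ => ((k:ℝ)+2) * t^k) := by
      have h2 := summable_pow_mul_geometric_of_norm_lt_one (R := ℝ) 1
        (by rwa [Real.norm_eq_abs])
      have h3 : Summable (fun k : ℕ => (2:ℝ) * t^k) :=
        (summable_geometric_of_lt_one ht0.le ht1).mul_left 2
      refine (h2.add h3).congr fun k => ?_
      ring
    refine Summable.of_nonneg_of_le (fun k => ?_) (fun k => ?_) h1
    · exact mul_nonneg (Real.log_nonneg (by linarith [Nat.cast_nonneg (α := ℝ) k])) (by positivity)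
    · refine mul_le_mul_of_nonneg_right ?_ (by positivity)
      have := Real.log_le_sub_one_of_pos (x := (k:ℝ)+2) (by positivity)
      linarith
  set S := ∑' k : ℕ, Real.log ((k:ℝ)+2) * t^k with hS
  have hs : HasSum (fun k : ℕ => Real.log ((k:ℝ)+2) * t^k) S := hsum_a.hasSum
  -- shifted series f
  set f : ℕ → ℝ := fun k => if k = 0 then 0 else Real.log ((k:ℝ)+1) * t^k with hfdef
  have hf : HasSum f (S * t) := by
    have h1 : HasSum (fun n : ℕ => f (n + 1)) (S * t) := by
      refine (hs.mul_right t).congr_fun fun n => ?_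
      simp only [hfdef]
      rw [if_neg (Nat.succ_ne_zero n)]
      push_cast
      ring
    have h1' : HasSum (fun n : ℕ => f (n + 1)) (S * t - ∑ i ∈ Finset.range 1, f i) := by
      simpa [hfdef] using h1
    exact (hasSum_nat_add_iff' 1).mp h1'
  have hd : HasSum (fun k : ℕ => Real.log ((k:ℝ)+2) * t^k - f k) (S - S * t) := hs.sub hf
  -- comparison series u
  set u : ℕ → ℝ := fun k => if k = 0 then Real.log 2 else t^k / k with hudef
  have hu : HasSum u (Real.log 2 - Real.log (1 - t)) := by
    have h1 : HasSum (fun n : ℕ => u (n + 1)) (-Real.log (1 - t)) := by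
      refine (Real.hasSum_pow_div_log_of_abs_lt_one habs).congr_fun fun n => ?_
      simp only [hudef]
      rw [if_neg (Nat.succ_ne_zero n)]
      push_cast
      ring_nf
    have h1' : HasSum (fun n : ℕ => u (n + 1))
        ((Real.log 2 - Real.log (1 - t)) - ∑ i ∈ Finset.range 1, u i) := by
      have : (Real.log 2 - Real.log (1 - t)) - ∑ i ∈ Finset.range 1, u i
          = -Real.log (1 - t) := by simp [hudef]
      rw [this]; exact h1
    exact (hasSum_nat_add_iff' 1).mp h1'
  -- pointwise bounds
  have hub : ∀ k : ℕ, Real.log ((k:ℝ)+2) * t^k - f k ≤ u k := by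
    intro k
    cases k with
    | zero => simp [hfdef, hudef]
    | succ n =>
      simp only [hfdef, hudef, if_neg (Nat.succ_ne_zero n)]
      push_cast
      have hln : Real.log ((n:ℝ)+1+2) - Real.log ((n:ℝ)+1+1) ≤ 1/((n:ℝ)+1) := by
        rw [← Real.log_div (by positivity) (by positivity)]
        have := Real.log_le_sub_one_of_pos
          (x := ((n:ℝ)+1+2)/((n:ℝ)+1+1)) (by positivity)
        have h2 : ((n:ℝ)+1+2)/((n:ℝ)+1+1) - 1 = 1/((n:ℝ)+2) := by
          field_simp; ring
        rw [h2] at this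
        have h3 : (1:ℝ)/((n:ℝ)+2) ≤ 1/((n:ℝ)+1) :=
          one_div_le_one_div_of_le (by positivity) (by linarith)
        linarith
      have htk : (0:ℝ) < t^(n+1) := by positivity
      have := mul_le_mul_of_nonneg_right hln htk.le
      calc Real.log ((n:ℝ)+1+2) * t^(n+1) - Real.log ((n:ℝ)+1+1) * t^(n+1)
          = (Real.log ((n:ℝ)+1+2) - Real.log ((n:ℝ)+1+1)) * t^(n+1) := by ring
        _ ≤ (1/((n:ℝ)+1)) * t^(n+1) := this
        _ = t^(n+1) / ((n:ℝ)+1) := by ring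
  have hlb : ∀ k : ℕ, (1/3) * u k ≤ Real.log ((k:ℝ)+2) * t^k - f k := by
    intro k
    cases k with
    | zero =>
      simp only [hfdef, hudef, if_pos rfl]
      have : (0:ℝ) ≤ Real.log 2 := Real.log_nonneg (by norm_num)
      simp only [pow_zero, Nat.cast_zero]
      norm_num
      linarith
    | succ n =>
      simp only [hfdef, hudef, if_neg (Nat.succ_ne_zero n)]
      push_cast
      have hln : 1/(3*((n:ℝ)+1)) ≤ Real.log ((n:ℝ)+1+2) - Real.log ((n:ℝ)+1+1) := by
        rw [← Real.log_div (by positivity) (by positivity)]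
        have := Real.one_sub_inv_le_log_of_pos
          (x := ((n:ℝ)+1+2)/((n:ℝ)+1+1)) (by positivity)
        have h2 : 1 - (((n:ℝ)+1+2)/((n:ℝ)+1+1))⁻¹ = 1/((n:ℝ)+3) := by
          rw [inv_div]
          field_simp
          ring
        rw [h2] at this
        have h3 : (1:ℝ)/(3*((n:ℝ)+1)) ≤ 1/((n:ℝ)+3) :=
          one_div_le_one_div_of_le (by positivity) (by linarith)
        linarith
      have htk : (0:ℝ) < t^(n+1) := by positivity
      have := mul_le_mul_of_nonneg_right hln htk.le
      have hn1 : ((n:ℝ)+1) ≠ 0 := by positivity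
      calc (1/3) * (t^(n+1) / ((n:ℝ)+1)) = (1/(3*((n:ℝ)+1))) * t^(n+1) := by
            field_simp
        _ ≤ (Real.log ((n:ℝ)+1+2) - Real.log ((n:ℝ)+1+1)) * t^(n+1) := this
        _ = Real.log ((n:ℝ)+1+2) * t^(n+1) - Real.log ((n:ℝ)+1+1) * t^(n+1) := by ring
  have hlog2 : Real.log (2 / (1 - t)) = Real.log 2 - Real.log (1 - t) :=
    Real.log_div two_ne_zero (ne_of_gt h1t)
  have hkey1 : S - S * t ≤ Real.log 2 - Real.log (1 - t) := hasSum_le hub hd hu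
  have hkey2 : (1/3) * (Real.log 2 - Real.log (1 - t)) ≤ S - S * t :=
    hasSum_le hlb (hu.mul_left (1/3)) hd
  constructor
  · rw [hlog2]; nlinarith
  · rw [hlog2]; nlinarith
end

section
/- There exist constants $c_1, c_2 > 0$ such that for every integer $k \geq 0$: $\frac{c_1}{\log(4k+4)} \leq \int_{\log 4}^{\infty} \frac{(1 - 4e^{-x})^k}{x^2}\, dx \leq \frac{c_2}{\log(4k+4)}$. -/
set_option maxHeartbeats 1000000
open Set MeasureTheory Real

lemma invsq_integrableOn {a : ℝ} (ha : 0 < a) :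
    IntegrableOn (fun x : ℝ => 1 / x ^ 2) (Ioi a) := by
  have h := integrableOn_Ioi_rpow_of_lt (show (-2:ℝ) < -1 by norm_num) ha
  refine h.congr_fun (fun x hx => ?_) measurableSet_Ioi
  have hx0 : 0 < x := ha.trans hx
  show x ^ (-2:ℝ) = 1 / x ^ 2
  rw [rpow_neg hx0.le, one_div, ← rpow_natCast x 2]
  norm_num

lemma invsq_integral {a : ℝ} (ha : 0 < a) :
    ∫ x in Ioi a, 1 / x ^ 2 = 1 / a := by
  have h := integral_Ioi_rpow_of_lt (show (-2:ℝ) < -1 by norm_num) ha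
  rw [show ((-2:ℝ) + 1) = -1 by norm_num] at h
  have : ∫ x in Ioi a, 1 / x ^ 2 = ∫ x in Ioi a, x ^ (-2 : ℝ) := by
    refine setIntegral_congr_fun measurableSet_Ioi (fun x hx => ?_)
    have hx0 : 0 < x := ha.trans hx
    rw [rpow_neg hx0.le, one_div, ← rpow_natCast x 2]
    norm_num
  rw [this, h, rpow_neg_one]
  field_simp

lemma exp_neg_lt {x : ℝ} (hx : Real.log 4 < x) : Real.exp (-x) < 1/4 := by
  have h : Real.exp (-x) < Real.exp (-(Real.log 4)) := Real.exp_lt_exp.2 (by linarith)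
  have h2 : Real.exp (-(Real.log 4)) = 1/4 := by
    rw [Real.exp_neg, Real.exp_log (by norm_num : (0:ℝ) < 4)]; norm_num
  linarith

lemma base_mem {x : ℝ} (hx : Real.log 4 < x) :
    0 ≤ 1 - 4 * Real.exp (-x) ∧ 1 - 4 * Real.exp (-x) ≤ 1 := by
  have h := exp_neg_lt hx
  have h0 := Real.exp_pos (-x)
  constructor <;> nlinarith

lemma log4_pos : 0 < Real.log 4 := Real.log_pos (by norm_num)

lemma fk_integrableOn (k : ℕ) :
    IntegrableOn (fun x : ℝ => (1 - 4 * Real.exp (-x)) ^ k / x ^ 2) (Ioi (Real.log 4)) := by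
  refine (invsq_integrableOn log4_pos).mono' ?_ ?_
  · exact (Measurable.pow ((measurable_const.sub
      (measurable_const.mul (Real.measurable_exp.comp measurable_neg))))
      measurable_const).div (measurable_id.pow_const 2) |>.aestronglyMeasurable
  · filter_upwards [ae_restrict_mem measurableSet_Ioi] with x hx
    have hb := base_mem hx
    have hx0 : 0 < x := log4_pos.trans hx
    rw [Real.norm_eq_abs, abs_div, abs_of_nonneg (pow_nonneg hb.1 k),
      abs_of_nonneg (by positivity : (0:ℝ) ≤ x ^ 2)]
    exact div_le_div_of_nonneg_right (pow_le_one₀ hb.1 hb.2) (by positivity)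

lemma lower (k : ℕ) :
    (1/4 : ℝ) / Real.log (4 * k + 4) ≤
      ∫ x in Ioi (Real.log 4), (1 - 4 * Real.exp (-x)) ^ k / x ^ 2 := by
  have hk : (0:ℝ) ≤ (k:ℝ) := Nat.cast_nonneg k
  set L := Real.log (4 * (k:ℝ) + 4) with hLdef
  have hL : 0 < L := Real.log_pos (by linarith)
  set T := Real.log (4 * ((k:ℝ) + 1) ^ 2) with hTdef
  have hT4 : Real.log 4 ≤ T := Real.log_le_log (by norm_num) (by nlinarith)
  have hT0 : 0 < T := lt_of_lt_of_le log4_pos hT4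
  have hTL : T ≤ 2 * L := by
    have h1 : (4 * ((k:ℝ) + 1) ^ 2) ≤ (4 * (k:ℝ) + 4) ^ 2 := by nlinarith
    calc T ≤ Real.log ((4 * (k:ℝ) + 4) ^ 2) := Real.log_le_log (by positivity) h1
      _ = 2 * L := by rw [Real.log_pow]; push_cast; ring
  have hint1 : IntegrableOn (fun x : ℝ => (1/2) * (1 / x ^ 2)) (Ioi T) :=
    (invsq_integrableOn hT0).const_mul _
  have hint2 : IntegrableOn (fun x : ℝ => (1 - 4 * Real.exp (-x)) ^ k / x ^ 2) (Ioi T) :=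
    (fk_integrableOn k).mono_set (Ioi_subset_Ioi hT4)
  have step1 : ∫ x in Ioi T, (1/2) * (1 / x ^ 2) ≤
      ∫ x in Ioi T, (1 - 4 * Real.exp (-x)) ^ k / x ^ 2 := by
    refine setIntegral_mono_on hint1 hint2 measurableSet_Ioi (fun x hx => ?_)
    have hx' : T < x := hx
    have hx4 : Real.log 4 < x := lt_of_le_of_lt hT4 hx'
    have hx0 : 0 < x := log4_pos.trans hx4
    have hexp : Real.exp (-x) < 1 / (4 * ((k:ℝ) + 1) ^ 2) := by
      have h1 : Real.exp (-x) < Real.exp (-T) := Real.exp_lt_exp.2 (by linarith)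
      have h2 : Real.exp (-T) = 1 / (4 * ((k:ℝ) + 1) ^ 2) := by
        rw [Real.exp_neg, hTdef, Real.exp_log (by positivity)]; rw [one_div]
      linarith
    set t := 1 / ((k:ℝ) + 1) ^ 2 with htdef
    have ht0 : 0 < t := by positivity
    have ht1 : t ≤ 1 := by rw [htdef]; rw [div_le_one (by positivity)]; nlinarith
    have htmul : t * ((k:ℝ) + 1) ^ 2 = 1 := by rw [htdef]; field_simp
    have hbase : 1 - t ≤ 1 - 4 * Real.exp (-x) := by
      have h4 : 4 * (1 / (4 * ((k:ℝ) + 1) ^ 2)) = t := by rw [htdef]; field_simp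
      have : 4 * Real.exp (-x) ≤ t := by nlinarith
      linarith
    have h1 : (0:ℝ) ≤ 1 - t := by linarith
    have hbern : 1 - (k:ℝ) * t ≤ (1 - t) ^ k := by
      have h := one_add_mul_le_pow (a := -t) (by linarith) k
      have e : (1 + -t) = 1 - t := by ring
      rw [e] at h; linarith
    have hhalf : (1/2 : ℝ) ≤ 1 - (k:ℝ) * t := by nlinarith
    have hpow : (1/2 : ℝ) ≤ (1 - 4 * Real.exp (-x)) ^ k := by
      calc (1/2 : ℝ) ≤ (1 - t) ^ k := le_trans hhalf hbern
        _ ≤ (1 - 4 * Real.exp (-x)) ^ k := pow_le_pow_left₀ h1 hbase k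
    have e : (1/2:ℝ) * (1/x^2) = (1/2)/x^2 := by ring
    rw [e]
    exact div_le_div_of_nonneg_right hpow (by positivity)
  have step2 : ∫ x in Ioi T, (1/2 : ℝ) * (1 / x ^ 2) = (1/2) * (1/T) := by
    rw [MeasureTheory.integral_const_mul, invsq_integral hT0]
  have step3 : ∫ x in Ioi T, (1 - 4 * Real.exp (-x)) ^ k / x ^ 2 ≤
      ∫ x in Ioi (Real.log 4), (1 - 4 * Real.exp (-x)) ^ k / x ^ 2 := by
    refine setIntegral_mono_set (fk_integrableOn k) ?_
      ((Ioi_subset_Ioi hT4).eventuallyLE)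
    filter_upwards [ae_restrict_mem measurableSet_Ioi] with x hx
    have hb := base_mem hx
    have hx0 : 0 < x := log4_pos.trans hx
    exact div_nonneg (pow_nonneg hb.1 k) (by positivity)
  have final : (1/4 : ℝ) / L ≤ (1/2) * (1/T) := by
    have h1 : 1 / (2 * L) ≤ 1 / T := one_div_le_one_div_of_le hT0 hTL
    have h2 : (1/4 : ℝ) / L = (1/2) * (1/(2*L)) := by ring
    rw [h2]; linarith
  calc (1/4 : ℝ) / L ≤ (1/2) * (1/T) := final
    _ = ∫ x in Ioi T, (1/2 : ℝ) * (1 / x ^ 2) := step2.symm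
    _ ≤ ∫ x in Ioi T, (1 - 4 * Real.exp (-x)) ^ k / x ^ 2 := step1
    _ ≤ _ := step3

lemma upper (k : ℕ) :
    (∫ x in Ioi (Real.log 4), (1 - 4 * Real.exp (-x)) ^ k / x ^ 2) ≤
      (2 + 2 / Real.log 4) / Real.log (4 * k + 4) := by
  have hk : (0:ℝ) ≤ (k:ℝ) := Nat.cast_nonneg k
  set L := Real.log (4 * (k:ℝ) + 4) with hLdef
  clear_value L
  have hL : 0 < L := hLdef ▸ Real.log_pos (by linarith)
  have hL4 : Real.log 4 ≤ L := hLdef ▸ Real.log_le_log (by norm_num) (by linarith)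
  have hcrude : ∀ a : ℝ, Real.log 4 ≤ a →
      (∫ x in Ioi a, (1 - 4 * Real.exp (-x)) ^ k / x ^ 2) ≤ 1 / a := by
    intro a ha
    have ha0 : 0 < a := lt_of_lt_of_le log4_pos ha
    calc (∫ x in Ioi a, (1 - 4 * Real.exp (-x)) ^ k / x ^ 2)
        ≤ ∫ x in Ioi a, 1 / x ^ 2 := by
          refine setIntegral_mono_on ((fk_integrableOn k).mono_set (Ioi_subset_Ioi ha))
            (invsq_integrableOn ha0) measurableSet_Ioi (fun x hx => ?_)
          have hx4 : Real.log 4 < x := lt_of_le_of_lt ha hx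
          have hb := base_mem hx4
          have hx0 : 0 < x := log4_pos.trans hx4
          exact div_le_div_of_nonneg_right (pow_le_one₀ hb.1 hb.2) (by positivity)
      _ = 1 / a := invsq_integral ha0
  rcases le_or_gt L (2 * Real.log 4) with hcase | hcase
  · -- small k : crude bound
    calc (∫ x in Ioi (Real.log 4), (1 - 4 * Real.exp (-x)) ^ k / x ^ 2)
        ≤ 1 / Real.log 4 := hcrude _ le_rfl
      _ ≤ 2 / L := by
          rw [div_le_div_iff₀ log4_pos hL]; linarith
      _ ≤ (2 + 2 / Real.log 4) / L := by
          have h : (0:ℝ) < 2 / Real.log 4 := by positivity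
          gcongr
          linarith
  · -- large k : split at M = L / 2
    set M := L / 2 with hMdef
    clear_value M
    have hM4 : Real.log 4 < M := by rw [hMdef]; linarith
    have hM0 : 0 < M := log4_pos.trans hM4
    set y := 4 * (k:ℝ) + 4 with hydef
    clear_value y
    have hy4 : (4:ℝ) ≤ y := by rw [hydef]; linarith
    have hy0 : (0:ℝ) < y := by linarith
    set q := Real.sqrt y with hqdef
    clear_value q
    have hq0 : 0 < q := by rw [hqdef]; exact Real.sqrt_pos.2 hy0
    have hqq : q * q = y := by rw [hqdef]; exact Real.mul_self_sqrt hy0.le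
    have hq2 : 2 ≤ q := by
      have : Real.sqrt 4 ≤ q := by rw [hqdef]; exact Real.sqrt_le_sqrt hy4
      rwa [show (4:ℝ) = 2 ^ 2 by norm_num, Real.sqrt_sq (by norm_num : (0:ℝ) ≤ 2)] at this
    have hlogq : Real.log q = L / 2 := by rw [hqdef, Real.log_sqrt hy0.le, hLdef]
    have hq1L : L / 2 ≤ q - 1 := by
      have := Real.log_le_sub_one_of_pos hq0
      linarith [hlogq ▸ this]
    have hexpM : Real.exp (-M) = 1 / q := by
      rw [Real.exp_neg, hMdef, ← hlogq, Real.exp_log hq0, one_div]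
    -- pointwise bound on Ioc (log 4) M
    have hpt : ∀ x ∈ Ioc (Real.log 4) M,
        (1 - 4 * Real.exp (-x)) ^ k / x ^ 2 ≤ (2 / L) * (1 / x ^ 2) := by
      intro x hx
      obtain ⟨hx1, hx2⟩ := hx
      have hx0 : 0 < x := log4_pos.trans hx1
      have hb := base_mem hx1
      set s := 4 * Real.exp (-x) with hsdef
      clear_value s
      have hs0 : 0 < s := by rw [hsdef]; positivity
      have hs1 : s ≤ 1 := by linarith [hb.1]
      have hks0 : (0:ℝ) < 1 + (k:ℝ) * s := by nlinarith
      have key : (1 - s) ^ k ≤ 1 / (1 + (k:ℝ) * s) := by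
        rw [le_div_iff₀ hks0]
        have h1 : 1 + (k:ℝ) * s ≤ (1 + s) ^ k := by
          have := one_add_mul_le_pow (a := s) (by linarith) k
          linarith [this]
        have h2 : (1 - s) ^ k * (1 + s) ^ k ≤ 1 := by
          rw [← mul_pow]
          exact pow_le_one₀ (by nlinarith) (by nlinarith)
        calc (1 - s) ^ k * (1 + (k:ℝ) * s) ≤ (1 - s) ^ k * (1 + s) ^ k :=
              mul_le_mul_of_nonneg_left h1 (pow_nonneg hb.1 k)
          _ ≤ 1 := h2
      have hsM : 4 / q ≤ s := by
        have h1 : Real.exp (-M) ≤ Real.exp (-x) := Real.exp_le_exp.2 (by linarith)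
        rw [hexpM] at h1
        rw [hsdef]
        calc 4 / q = 4 * (1 / q) := by ring
          _ ≤ 4 * Real.exp (-x) := by linarith
      have hbig : L / 2 ≤ 1 + (k:ℝ) * s := by
        have he : (k:ℝ) * (4 / q) = q - 4 / q := by
          field_simp
          nlinarith [hqq]
        have h4q : 4 / q ≤ 2 := by rw [div_le_iff₀ hq0]; linarith
        have : q - 2 ≤ (k:ℝ) * s := by
          calc q - 2 ≤ q - 4 / q := by linarith
            _ = (k:ℝ) * (4 / q) := he.symm
            _ ≤ (k:ℝ) * s := mul_le_mul_of_nonneg_left hsM hk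
        linarith
      have hfrac : 1 / (1 + (k:ℝ) * s) ≤ 2 / L := by
        rw [div_le_div_iff₀ hks0 hL]; linarith
      calc (1 - s) ^ k / x ^ 2 ≤ (1 / (1 + (k:ℝ) * s)) / x ^ 2 :=
            div_le_div_of_nonneg_right key (by positivity)
        _ ≤ (2 / L) / x ^ 2 := div_le_div_of_nonneg_right hfrac (by positivity)
        _ = (2 / L) * (1 / x ^ 2) := by ring
    -- split the integral
    have hsplit : (∫ x in Ioi (Real.log 4), (1 - 4 * Real.exp (-x)) ^ k / x ^ 2) =
        (∫ x in Ioc (Real.log 4) M, (1 - 4 * Real.exp (-x)) ^ k / x ^ 2) +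
        (∫ x in Ioi M, (1 - 4 * Real.exp (-x)) ^ k / x ^ 2) := by
      rw [← setIntegral_union (Ioc_disjoint_Ioi le_rfl) measurableSet_Ioi
        ((fk_integrableOn k).mono_set Ioc_subset_Ioi_self)
        ((fk_integrableOn k).mono_set (Ioi_subset_Ioi hM4.le)),
        Ioc_union_Ioi_eq_Ioi hM4.le]
    have hA : (∫ x in Ioc (Real.log 4) M, (1 - 4 * Real.exp (-x)) ^ k / x ^ 2) ≤
        (2 / L) * (1 / Real.log 4) := by
      calc (∫ x in Ioc (Real.log 4) M, (1 - 4 * Real.exp (-x)) ^ k / x ^ 2)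
          ≤ ∫ x in Ioc (Real.log 4) M, (2 / L) * (1 / x ^ 2) := by
            refine setIntegral_mono_on ((fk_integrableOn k).mono_set Ioc_subset_Ioi_self)
              (((invsq_integrableOn log4_pos).mono_set Ioc_subset_Ioi_self).const_mul _)
              measurableSet_Ioc hpt
        _ = (2 / L) * ∫ x in Ioc (Real.log 4) M, (1 / x ^ 2) :=
            MeasureTheory.integral_const_mul _ _
        _ ≤ (2 / L) * (1 / Real.log 4) := by
            apply mul_le_mul_of_nonneg_left ?_ (by positivity)
            calc (∫ x in Ioc (Real.log 4) M, (1 / x ^ 2))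
                ≤ ∫ x in Ioi (Real.log 4), 1 / x ^ 2 := by
                  refine setIntegral_mono_set (invsq_integrableOn log4_pos) ?_
                    (Ioc_subset_Ioi_self.eventuallyLE)
                  filter_upwards [ae_restrict_mem measurableSet_Ioi] with x hx
                  have hx0 : 0 < x := log4_pos.trans hx
                  positivity
              _ = 1 / Real.log 4 := invsq_integral log4_pos
    have hB : (∫ x in Ioi M, (1 - 4 * Real.exp (-x)) ^ k / x ^ 2) ≤ 2 / L := by
      calc (∫ x in Ioi M, (1 - 4 * Real.exp (-x)) ^ k / x ^ 2) ≤ 1 / M := hcrude M hM4.le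
        _ = 2 / L := by rw [hMdef]; field_simp
    calc (∫ x in Ioi (Real.log 4), (1 - 4 * Real.exp (-x)) ^ k / x ^ 2)
        ≤ (2 / L) * (1 / Real.log 4) + 2 / L := by rw [hsplit]; exact add_le_add hA hB
      _ = (2 + 2 / Real.log 4) / L := by field_simp; ring

theorem stmt_7 :
    ∃ c₁ c₂ : ℝ, 0 < c₁ ∧ 0 < c₂ ∧ ∀ k : ℕ,
      c₁ / Real.log (4 * k + 4) ≤
        (∫ x in Set.Ioi (Real.log 4), (1 - 4 * Real.exp (-x)) ^ k / x ^ 2) ∧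
      (∫ x in Set.Ioi (Real.log 4), (1 - 4 * Real.exp (-x)) ^ k / x ^ 2) ≤
        c₂ / Real.log (4 * k + 4) := by
  refine ⟨1/4, 2 + 2 / Real.log 4, by norm_num, by positivity, fun k => ⟨lower k, upper k⟩⟩
end

section
/- Define for integers $n \ge 0$ and reals $s \ge 1$: $U(n,s) = \left(\int_0^1 \left(\frac{1-r}{1+r}\right)^s r^{2n+1} dr\right)^2$ and $V(n,s) = \frac{1}{2n+2}\int_0^1 \left(\frac{1-r}{1+r}\right)^{2s} r^{2n+1} dr$. Then $\sup_{n \in \mathbb{N}} \sup_{s \in [1,2]} U(n,s)/V(n,s) < 1$. -/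
open MeasureTheory

/-- `U(n,s) = (∫₀¹ ((1-r)/(1+r))^s r^{2n+1} dr)²`. -/
noncomputable def Ufun (n : ℕ) (s : ℝ) : ℝ :=
  (∫ r in Set.Ioo (0 : ℝ) 1, ((1 - r) / (1 + r)) ^ s * r ^ (2 * n + 1)) ^ 2

/-- `V(n,s) = (2n+2)⁻¹ ∫₀¹ ((1-r)/(1+r))^{2s} r^{2n+1} dr`. -/
noncomputable def Vfun (n : ℕ) (s : ℝ) : ℝ :=
  (1 / (2 * n + 2)) *
    ∫ r in Set.Ioo (0 : ℝ) 1, ((1 - r) / (1 + r)) ^ (2 * s) * r ^ (2 * n + 1)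

lemma cs_aux {A : Set ℝ} (hA : MeasurableSet A) (φ h : ℝ → ℝ)
    (hh : IntegrableOn h A) (hφh : IntegrableOn (fun x => φ x * h x) A)
    (hφ2h : IntegrableOn (fun x => (φ x)^2 * h x) A)
    (hpos : ∀ x ∈ A, 0 ≤ h x) :
    (∫ x in A, φ x * h x)^2 ≤ (∫ x in A, (φ x)^2 * h x) * ∫ x in A, h x := by
  set B := ∫ x in A, φ x * h x with hB
  set C := ∫ x in A, h x with hC
  set D := ∫ x in A, (φ x)^2 * h x with hD
  have hC0 : 0 ≤ C := setIntegral_nonneg hA hpos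
  have hD0 : 0 ≤ D := setIntegral_nonneg hA (fun x hx => mul_nonneg (sq_nonneg _) (hpos x hx))
  have key : ∀ t : ℝ, 0 ≤ D - 2*t*B + t^2*C := by
    intro t
    have h1 : (0:ℝ) ≤ ∫ x in A, (φ x - t)^2 * h x :=
      setIntegral_nonneg hA (fun x hx => mul_nonneg (sq_nonneg _) (hpos x hx))
    have h2 : (∫ x in A, (φ x - t)^2 * h x) = D - 2*t*B + t^2*C := by
      have e : ∀ x, (φ x - t)^2 * h x
          = ((φ x)^2 * h x - (2*t)*(φ x * h x)) + t^2 * h x := by intro x; ring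
      simp_rw [e]
      have hi1 : IntegrableOn (fun x => (φ x)^2 * h x - (2*t)*(φ x * h x)) A :=
        hφ2h.sub (hφh.const_mul (2*t))
      rw [integral_add hi1 (hh.const_mul (t^2)),
        integral_sub hφ2h (hφh.const_mul (2*t)), integral_const_mul, integral_const_mul]
    linarith [h2 ▸ h1]
  rcases eq_or_lt_of_le hC0 with hCeq | hCpos
  · by_cases hB0 : B = 0
    · rw [hB0]; nlinarith
    · exfalso
      have h3 := key ((D+1)/(2*B))
      rw [← hCeq] at h3
      have h4 : 2*((D+1)/(2*B))*B = D+1 := by field_simp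
      linarith [h3, h4]
  · have h4 := key (B/C)
    have : D - 2*(B/C)*B + (B/C)^2*C = D - B^2/C := by field_simp; ring
    rw [this] at h4
    have := (div_le_iff₀ hCpos).mp (by linarith : B^2/C ≤ D)
    linarith

lemma core_alg (q T P P' x₁ x₂ : ℝ) (hq1 : 27/200 ≤ q) (hq2 : q ≤ 46/125)
    (hT : 0 < T) (hP'0 : 0 ≤ P') (hPP' : 3*q*P' ≤ P)
    (hx₁ : 0 ≤ x₁) (hx₂ : 0 ≤ x₂)
    (h1 : x₁^2 ≤ P * (q*T)) (h2 : x₂^2 ≤ P' * ((1-q)*T)) :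
    (x₁+x₂)^2 ≤ (49/50) * ((P+P') * (q*T + (1-q)*T)) := by
  have hq0 : (0:ℝ) < q := by linarith
  have hP0 : (0:ℝ) ≤ P := le_trans (by positivity) hPP'
  have h5 : 2*q^2 - (22/25)*q + 1/25 ≤ 0 := by
    nlinarith [mul_nonneg (by linarith : (0:ℝ) ≤ q - 27/200) (by linarith : (0:ℝ) ≤ 46/125 - q)]
  have hbr : (2*q^2+q)*P + (2*q+4*q^2)*((1-q)*P') ≤ (49/25)*q*(P+P') := by
    nlinarith [mul_nonneg (by linarith : (0:ℝ) ≤ 24/25 - 2*q) (by linarith : (0:ℝ) ≤ P - 3*q*P'),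
      mul_nonneg hP'0 (by nlinarith : (0:ℝ) ≤ -(2*q^2) + (22/25)*q - 1/25),
      mul_nonneg hq0.le hP'0]
  have e1 : 2*q*(x₁+x₂)^2 ≤ (2*q+1)*x₁^2 + (2*q+4*q^2)*x₂^2 := by
    nlinarith [sq_nonneg (x₁ - 2*q*x₂)]
  have e2 : (2*q+1)*x₁^2 ≤ (2*q+1)*(P*(q*T)) := by nlinarith
  have e3 : (2*q+4*q^2)*x₂^2 ≤ (2*q+4*q^2)*(P'*((1-q)*T)) := by nlinarith
  have e4 : (2*q+1)*(P*(q*T)) + (2*q+4*q^2)*(P'*((1-q)*T))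
      ≤ 2*q*((49/50) * ((P+P') * (q*T + (1-q)*T))) := by
    have := mul_le_mul_of_nonneg_left hbr hT.le
    nlinarith [this]
  have : 2*q*(x₁+x₂)^2 ≤ 2*q*((49/50) * ((P+P') * (q*T + (1-q)*T))) := by linarith
  exact le_of_mul_le_mul_left (by linarith) (by linarith : (0:ℝ) < 2*q)

set_option maxHeartbeats 1000000 in
theorem stmt_9 :
    ∃ γ : ℝ, γ < 1 ∧ ∀ n : ℕ, ∀ s ∈ Set.Icc (1 : ℝ) 2,
      Ufun n s / Vfun n s ≤ γ := by
  refine ⟨49/50, by norm_num, ?_⟩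
  intro n s hs
  obtain ⟨hs1, _hs2⟩ := hs
  have hn0 : (0:ℝ) ≤ n := Nat.cast_nonneg n
  set m : ℝ := 2*(n:ℝ)+2 with hm
  have hm2 : (2:ℝ) ≤ m := by rw [hm]; linarith
  have hm0 : (0:ℝ) < m := by linarith
  set a : ℝ := 1 - 1/m with ha
  have hu0 : (0:ℝ) < 1/m := by positivity
  have hu1 : 1/m ≤ 1/2 := by rw [div_le_div_iff₀ hm0 (by norm_num)]; linarith
  have ha0 : 0 < a := by simp only [ha]; linarith
  have ha1 : a < 1 := by simp only [ha]; linarith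
  set q : ℝ := a^(2*n+2) with hq
  have hq0 : 0 < q := by rw [hq]; exact pow_pos ha0 _
  -- q bounds
  have hqu : q ≤ 46/125 := by
    have h1 : a ≤ Real.exp (-(1/m)) := by
      have := Real.add_one_le_exp (-(1/m)); simp only [ha]; linarith
    have h2 : q ≤ Real.exp (-(1/m))^(2*n+2) := by
      rw [hq]; exact pow_le_pow_left₀ ha0.le h1 _
    have h3 : Real.exp (-(1/m))^(2*n+2) = Real.exp (-1) := by
      rw [← Real.exp_nat_mul]; congr 1
      push_cast; field_simp [hm]; try ring
    have h4 : Real.exp (-1) ≤ 46/125 := by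
      rw [Real.exp_neg]
      have h5 : (125:ℝ)/46 ≤ Real.exp 1 := by nlinarith [Real.exp_one_gt_d9]
      have := inv_anti₀ (by norm_num : (0:ℝ) < 125/46) h5
      calc (Real.exp 1)⁻¹ ≤ ((125:ℝ)/46)⁻¹ := this
        _ = 46/125 := by norm_num
    linarith [h3 ▸ h2]
  have hql : 27/200 ≤ q := by
    have hx := Real.add_one_le_exp (2/m)
    have key : Real.exp (-(2/m)) * Real.exp (2/m) = 1 := by
      rw [← Real.exp_add]; simp
    have h6 : 1 ≤ a*(1+2*(1/m)) := by
      have : a*(1+2*(1/m)) = 1 + 1/m - 2*(1/m)^2 := by rw [ha]; field_simp; ring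
      rw [this]; nlinarith [hu0, hu1]
    have e1 : Real.exp (-(2/m)) ≤ a := by
      have hE : (0:ℝ) < Real.exp (2/m) := Real.exp_pos _
      have h7 : 1 ≤ a * Real.exp (2/m) := by
        have : a*(1+2*(1/m)) ≤ a * Real.exp (2/m) := by
          apply mul_le_mul_of_nonneg_left _ ha0.le
          have : 2*(1/m) = 2/m := by ring
          rw [this]; linarith
        linarith
      nlinarith [Real.exp_pos (-(2/m))]
    have h2 : Real.exp (-(2/m))^(2*n+2) ≤ q := by
      rw [hq]; exact pow_le_pow_left₀ (Real.exp_nonneg _) e1 _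
    have h3 : Real.exp (-(2/m))^(2*n+2) = Real.exp (-2) := by
      rw [← Real.exp_nat_mul]; congr 1
      push_cast; field_simp [hm]; try ring
    have h4 : (27:ℝ)/200 ≤ Real.exp (-2) := by
      have k1 : Real.exp (-2) * Real.exp 2 = 1 := by rw [← Real.exp_add]; simp
      have k2 : Real.exp 2 = Real.exp 1 * Real.exp 1 := by
        rw [← Real.exp_add]; norm_num
      nlinarith [Real.exp_one_lt_d9, Real.exp_pos (-2), Real.exp_pos 1]
    linarith [h3 ▸ h2]
  -- continuity and integrability
  have hs0 : (0:ℝ) ≤ s := by linarith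
  have hbase : ContinuousOn (fun r : ℝ => (1-r)/(1+r)) (Set.Icc 0 1) := by
    apply ContinuousOn.div (by fun_prop) (by fun_prop)
    intro x hx
    have := hx.1
    intro hc; linarith
  have hφcon : ContinuousOn (fun r : ℝ => ((1-r)/(1+r)) ^ s) (Set.Icc 0 1) :=
    hbase.rpow_const (fun x _ => Or.inr hs0)
  have hφ2con : ContinuousOn (fun r : ℝ => ((1-r)/(1+r)) ^ (2*s)) (Set.Icc 0 1) :=
    hbase.rpow_const (fun x _ => Or.inr (by linarith))
  have hWcon : Continuous (fun r : ℝ => r ^ (2*n+1)) := by fun_prop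
  have hGint : IntegrableOn (fun r : ℝ => ((1-r)/(1+r)) ^ s * r ^ (2*n+1)) (Set.Icc 0 1) :=
    (hφcon.mul hWcon.continuousOn).integrableOn_Icc
  have hG2int : IntegrableOn (fun r : ℝ => ((1-r)/(1+r)) ^ (2*s) * r ^ (2*n+1)) (Set.Icc 0 1) :=
    (hφ2con.mul hWcon.continuousOn).integrableOn_Icc
  have hsub1 : Set.Ioc (0:ℝ) a ⊆ Set.Icc 0 1 :=
    fun x hx => ⟨hx.1.le, hx.2.trans ha1.le⟩
  have hsub2 : Set.Ioo a (1:ℝ) ⊆ Set.Icc 0 1 :=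
    fun x hx => ⟨(ha0.trans hx.1).le, hx.2.le⟩
  -- splitting
  have hun : Set.Ioc 0 a ∪ Set.Ioo a 1 = Set.Ioo (0:ℝ) 1 :=
    Set.Ioc_union_Ioo_eq_Ioo ha0.le ha1
  have hdisj : Disjoint (Set.Ioc (0:ℝ) a) (Set.Ioo a 1) := by
    apply Set.disjoint_left.mpr
    rintro x ⟨_, hxa⟩ ⟨hax, _⟩
    exact absurd hxa (not_le.mpr hax)
  have hsplitG : (∫ r in Set.Ioo (0:ℝ) 1, ((1-r)/(1+r)) ^ s * r ^ (2*n+1))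
      = (∫ r in Set.Ioc (0:ℝ) a, ((1-r)/(1+r)) ^ s * r ^ (2*n+1))
        + ∫ r in Set.Ioo a (1:ℝ), ((1-r)/(1+r)) ^ s * r ^ (2*n+1) := by
    rw [← hun]
    exact setIntegral_union hdisj measurableSet_Ioo (hGint.mono_set hsub1) (hGint.mono_set hsub2)
  have hsplitG2 : (∫ r in Set.Ioo (0:ℝ) 1, ((1-r)/(1+r)) ^ (2*s) * r ^ (2*n+1))
      = (∫ r in Set.Ioc (0:ℝ) a, ((1-r)/(1+r)) ^ (2*s) * r ^ (2*n+1))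
        + ∫ r in Set.Ioo a (1:ℝ), ((1-r)/(1+r)) ^ (2*s) * r ^ (2*n+1) := by
    rw [← hun]
    exact setIntegral_union hdisj measurableSet_Ioo (hG2int.mono_set hsub1) (hG2int.mono_set hsub2)
  -- weight integrals
  have hQ1 : (∫ r in Set.Ioc (0:ℝ) a, r ^ (2*n+1)) = q * (1/m) := by
    rw [← intervalIntegral.integral_of_le ha0.le, integral_pow]
    push_cast [hq, hm]
    rw [zero_pow (by omega)]
    ring
  have hQ2 : (∫ r in Set.Ioo a (1:ℝ), r ^ (2*n+1)) = (1-q) * (1/m) := by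
    rw [← integral_Ioc_eq_integral_Ioo, ← intervalIntegral.integral_of_le ha1.le, integral_pow]
    push_cast [hq, hm]
    ring
  have hOneA : (∫ r in Set.Ioo a (1:ℝ), (1-r)^2) = (1/m)^3/3 := by
    rw [← integral_Ioc_eq_integral_Ioo, ← intervalIntegral.integral_of_le ha1.le]
    have := intervalIntegral.integral_comp_sub_left (a := a) (b := 1) (fun x => x^2) 1
    rw [this, integral_pow]
    have h1a : (1:ℝ) - a = 1/m := by rw [ha]; ring
    norm_num [h1a]
  -- abbreviations
  set x₁ := ∫ r in Set.Ioc (0:ℝ) a, ((1-r)/(1+r)) ^ s * r ^ (2*n+1) with hx₁def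
  set x₂ := ∫ r in Set.Ioo a (1:ℝ), ((1-r)/(1+r)) ^ s * r ^ (2*n+1) with hx₂def
  set P₁ := ∫ r in Set.Ioc (0:ℝ) a, ((1-r)/(1+r)) ^ (2*s) * r ^ (2*n+1) with hP₁def
  set P₂ := ∫ r in Set.Ioo a (1:ℝ), ((1-r)/(1+r)) ^ (2*s) * r ^ (2*n+1) with hP₂def
  set κ : ℝ := ((1-a)/(1+a))^(2*s) with hκdef
  have hκ0 : 0 < κ := Real.rpow_pos_of_pos (by apply div_pos <;> linarith) _
  -- nonnegativity of x₁ x₂ P₂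
  have hx₁0 : 0 ≤ x₁ := by
    apply setIntegral_nonneg measurableSet_Ioc
    intro x hx
    have h0 : (0:ℝ) ≤ (1-x)/(1+x) := div_nonneg (by linarith [hx.2, ha1.le]) (by linarith [hx.1.le])
    exact mul_nonneg (Real.rpow_nonneg h0 _) (pow_nonneg hx.1.le _)
  have hx₂0 : 0 ≤ x₂ := by
    apply setIntegral_nonneg measurableSet_Ioo
    intro x hx
    have h0 : (0:ℝ) ≤ (1-x)/(1+x) := div_nonneg (by linarith [hx.2]) (by linarith [ha0, hx.1])
    exact mul_nonneg (Real.rpow_nonneg h0 _) (pow_nonneg (ha0.trans hx.1).le _)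
  have hP₂0 : 0 ≤ P₂ := by
    apply setIntegral_nonneg measurableSet_Ioo
    intro x hx
    have h0 : (0:ℝ) ≤ (1-x)/(1+x) := div_nonneg (by linarith [hx.2]) (by linarith [ha0, hx.1])
    exact mul_nonneg (Real.rpow_nonneg h0 _) (pow_nonneg (ha0.trans hx.1).le _)
  -- lower bound for P₁
  have hP₁low : κ * (q * (1/m)) ≤ P₁ := by
    have hmono : (∫ r in Set.Ioc (0:ℝ) a, κ * r ^ (2*n+1)) ≤ P₁ := by
      apply setIntegral_mono_on
        (((hWcon.continuousOn.integrableOn_Icc).mono_set hsub1).const_mul κ)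
        (hG2int.mono_set hsub1) measurableSet_Ioc
      intro x hx
      have hx0 : 0 < x := hx.1
      have hxa : x ≤ a := hx.2
      have hbase_ineq : (1-a)/(1+a) ≤ (1-x)/(1+x) := by
        rw [div_le_div_iff₀ (by linarith) (by linarith)]
        nlinarith
      have : κ ≤ ((1-x)/(1+x))^(2*s) := by
        rw [hκdef]
        exact Real.rpow_le_rpow (div_nonneg (by linarith) (by linarith)) hbase_ineq (by linarith)
      exact mul_le_mul_of_nonneg_right this (pow_nonneg hx0.le _)
    rw [integral_const_mul, hQ1] at hmono
    exact hmono
  -- upper bound for P₂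
  have hP₂up : P₂ ≤ κ * m^2 * ((1/m)^3/3) := by
    have hmono : P₂ ≤ ∫ r in Set.Ioo a (1:ℝ), (κ * m^2) * (1-r)^2 := by
      apply setIntegral_mono_on (hG2int.mono_set hsub2)
        (((continuous_const.mul ((continuous_const.sub continuous_id).pow 2)).continuousOn.integrableOn_Icc).mono_set hsub2)
        measurableSet_Ioo
      intro r hr
      have hr0 : 0 < r := ha0.trans hr.1
      have hr1 : r < 1 := hr.2
      have h1r : 0 < 1 - r := by linarith
      have h1pr : 0 < 1 + r := by linarith
      have h1pa : 0 < 1 + a := by linarith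
      have hy0 : 0 < m * (1-r) := by positivity
      have hy1 : m * (1-r) ≤ 1 := by
        have : 1 - r < 1/m := by simp only [ha] at hr; linarith [hr.1]
        calc m * (1-r) ≤ m * (1/m) := by nlinarith
          _ = 1 := by field_simp
      have b1 : (1-r)/(1+r) ≤ ((1-a)/(1+a)) * (m*(1-r)) := by
        have e : ((1-a)/(1+a)) * (m*(1-r)) = (1-r)/(1+a) := by
          rw [ha]; field_simp; ring
        rw [e, div_le_div_iff₀ h1pr h1pa]
        nlinarith [hr.1, ha0]
      have b2 : ((1-r)/(1+r))^(2*s) ≤ (((1-a)/(1+a)) * (m*(1-r)))^(2*s) :=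
        Real.rpow_le_rpow (div_nonneg h1r.le h1pr.le) b1 (by linarith)
      have b3 : (((1-a)/(1+a)) * (m*(1-r)))^(2*s) = κ * (m*(1-r))^(2*s) := by
        rw [hκdef, Real.mul_rpow (div_nonneg (by linarith) (by linarith)) hy0.le]
      have b4 : (m*(1-r))^(2*s) ≤ (m*(1-r))^(2:ℝ) :=
        Real.rpow_le_rpow_of_exponent_ge hy0 hy1 (by linarith)
      have b5 : (m*(1-r))^(2:ℝ) = (m*(1-r))^(2:ℕ) := by
        rw [← Real.rpow_natCast (m*(1-r)) 2]; norm_num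
      have bW : r ^ (2*n+1) ≤ 1 := pow_le_one₀ hr0.le hr1.le
      have bf : ((1-r)/(1+r))^(2*s) ≤ κ * (m*(1-r))^2 := by
        calc ((1-r)/(1+r))^(2*s) ≤ κ * (m*(1-r))^(2*s) := by rw [← b3]; exact b2
          _ ≤ κ * (m*(1-r))^(2:ℝ) := by
              exact mul_le_mul_of_nonneg_left b4 hκ0.le
          _ = κ * (m*(1-r))^2 := by rw [b5]
      calc ((1-r)/(1+r))^(2*s) * r^(2*n+1)
          ≤ (κ * (m*(1-r))^2) * 1 := by
            apply mul_le_mul bf bW (pow_nonneg hr0.le _)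
            exact mul_nonneg hκ0.le (sq_nonneg _)
        _ = (κ * m^2) * (1-r)^2 := by ring
    rw [integral_const_mul, hOneA] at hmono
    calc P₂ ≤ (κ * m^2) * ((1/m)^3/3) := hmono
      _ = κ * m^2 * ((1/m)^3/3) := by ring
  have h3q : 3*q*P₂ ≤ P₁ := by
    have e : κ * m^2 * ((1/m)^3/3) = κ * (1/m) / 3 := by field_simp
    rw [e] at hP₂up
    calc 3*q*P₂ ≤ 3*q*(κ * (1/m)/3) := by nlinarith
      _ = κ * (q * (1/m)) := by ring
      _ ≤ P₁ := hP₁low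
  -- Cauchy-Schwarz on each piece
  have hEq1 : Set.EqOn (fun r : ℝ => ((1-r)/(1+r)) ^ (2*s) * r ^ (2*n+1))
      (fun r : ℝ => (((1-r)/(1+r)) ^ s)^2 * r ^ (2*n+1)) (Set.Ioc 0 a) := by
    intro x hx
    have hx0 : (0:ℝ) ≤ (1-x)/(1+x) :=
      div_nonneg (by linarith [hx.2, ha1.le]) (by linarith [hx.1.le])
    simp only
    congr 1
    rw [← Real.rpow_natCast (((1-x)/(1+x))^s) 2, ← Real.rpow_mul hx0]
    norm_num [mul_comm]
  have hEq2 : Set.EqOn (fun r : ℝ => ((1-r)/(1+r)) ^ (2*s) * r ^ (2*n+1))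
      (fun r : ℝ => (((1-r)/(1+r)) ^ s)^2 * r ^ (2*n+1)) (Set.Ioo a 1) := by
    intro x hx
    have hx0 : (0:ℝ) ≤ (1-x)/(1+x) :=
      div_nonneg (by linarith [hx.2]) (by linarith [ha0, hx.1])
    simp only
    congr 1
    rw [← Real.rpow_natCast (((1-x)/(1+x))^s) 2, ← Real.rpow_mul hx0]
    norm_num [mul_comm]
  have hcs1 : x₁^2 ≤ P₁ * (q * (1/m)) := by
    have := cs_aux measurableSet_Ioc (fun r : ℝ => ((1-r)/(1+r)) ^ s)
      (fun r : ℝ => r ^ (2*n+1))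
      ((hWcon.continuousOn.integrableOn_Icc).mono_set hsub1)
      (hGint.mono_set hsub1)
      ((hG2int.mono_set hsub1).congr_fun hEq1 measurableSet_Ioc)
      (fun x hx => pow_nonneg hx.1.le _)
    rw [← setIntegral_congr_fun measurableSet_Ioc hEq1, hQ1] at this
    exact this
  have hcs2 : x₂^2 ≤ P₂ * ((1-q) * (1/m)) := by
    have := cs_aux measurableSet_Ioo (fun r : ℝ => ((1-r)/(1+r)) ^ s)
      (fun r : ℝ => r ^ (2*n+1))
      ((hWcon.continuousOn.integrableOn_Icc).mono_set hsub2)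
      (hGint.mono_set hsub2)
      ((hG2int.mono_set hsub2).congr_fun hEq2 measurableSet_Ioo)
      (fun x hx => pow_nonneg (ha0.trans hx.1).le _)
    rw [← setIntegral_congr_fun measurableSet_Ioo hEq2, hQ2] at this
    exact this
  -- core algebra
  have hcore := core_alg q (1/m) P₁ P₂ x₁ x₂ hql hqu hu0 hP₂0 h3q hx₁0 hx₂0 hcs1 hcs2
  -- assemble
  have hUeq : Ufun n s = (x₁ + x₂)^2 := by
    rw [Ufun, hsplitG]
  have hVeq : Vfun n s = (1/m) * (P₁ + P₂) := by
    rw [Vfun, hsplitG2, ← hm]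
  have hP₁pos : 0 < P₁ := lt_of_lt_of_le (mul_pos hκ0 (mul_pos hq0 hu0)) hP₁low
  have hV0 : 0 < Vfun n s := by
    rw [hVeq]; exact mul_pos hu0 (by linarith)
  rw [div_le_iff₀ hV0, hUeq, hVeq]
  calc (x₁+x₂)^2 ≤ (49/50) * ((P₁+P₂) * (q*(1/m) + (1-q)*(1/m))) := hcore
    _ = 49/50 * ((1/m) * (P₁ + P₂)) := by ring
end

section
/- Let $d \ge 1$ and let $G : [0,1] \to [0,\infty)$ be square-integrable. Then $\left(\int_0^1\int_0^1 |\lambda^{d+1}G(\lambda t) - G(t)|^2 d\lambda\, dt\right)^{1/2} \ge \left(1 - \frac{1}{\sqrt{2d+2}}\right)\left(\int_0^1 G(t)^2 dt\right)^{1/2} \ge \left(1 - \frac{1}{\sqrt{2d+2}}\right)\int_0^1 G(t)\, dt$. -/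
open MeasureTheory

lemma cauchy_schwarz_int {α : Type*} [MeasurableSpace α] (μ : Measure α) (f g : α → ℝ)
    (hf : AEStronglyMeasurable f μ) (hg : AEStronglyMeasurable g μ)
    (hfn : 0 ≤ᵐ[μ] f) (hgn : 0 ≤ᵐ[μ] g)
    (hf2 : Integrable (fun x => f x ^ 2) μ) (hg2 : Integrable (fun x => g x ^ 2) μ) :
    ∫ x, f x * g x ∂μ ≤ Real.sqrt (∫ x, f x ^ 2 ∂μ) * Real.sqrt (∫ x, g x ^ 2 ∂μ) := by
  have h22 : (2:ℝ).HolderConjugate 2 := Real.HolderConjugate.two_two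
  have hfm : MemLp f (ENNReal.ofReal 2) μ := by
    rw [show ENNReal.ofReal 2 = 2 by norm_num]
    exact (memLp_two_iff_integrable_sq hf).2 hf2
  have hgm : MemLp g (ENNReal.ofReal 2) μ := by
    rw [show ENNReal.ofReal 2 = 2 by norm_num]
    exact (memLp_two_iff_integrable_sq hg).2 hg2
  have := integral_mul_le_Lp_mul_Lq_of_nonneg h22 hfn hgn hfm hgm
  simp only [show ∀ x : ℝ, x ^ (2:ℝ) = x ^ 2 from fun x => by
    rw [show (2:ℝ) = ((2:ℕ):ℝ) by norm_num, Real.rpow_natCast]] at this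
  rwa [Real.sqrt_eq_rpow, Real.sqrt_eq_rpow]

lemma integrable_scale (h : ℝ → ℝ) (hh : IntegrableOn h (Set.Icc (0:ℝ) 1)) {l : ℝ}
    (hl : 0 < l) (hl1 : l ≤ 1) : IntegrableOn (fun t => h (l * t)) (Set.Icc (0:ℝ) 1) := by
  have hI : IntervalIntegrable h volume 0 1 :=
    (intervalIntegrable_iff_integrableOn_Icc_of_le zero_le_one).2 hh
  have h0l : (0:ℝ)/l ≤ 1/l := by rw [zero_div]; positivity
  have : IntervalIntegrable (fun x => h (l * x)) volume 0 1 :=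
    (hI.comp_mul_left (c := l)).mono_set (by
      rw [Set.uIcc_of_le h0l, Set.uIcc_of_le zero_le_one]
      apply Set.Icc_subset_Icc
      · simp
      · rw [le_div_iff₀ hl]; nlinarith)
  exact (intervalIntegrable_iff_integrableOn_Icc_of_le zero_le_one).1 this

lemma scale_int (h : ℝ → ℝ) {l : ℝ} (hl : 0 < l) :
    ∫ t in Set.Icc (0:ℝ) 1, h (l * t) = l⁻¹ * ∫ s in Set.Icc (0:ℝ) l, h s := by
  have h1 : ∫ t in Set.Icc (0:ℝ) 1, h (l * t) = ∫ t in (0:ℝ)..1, h (l * t) := by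
    rw [intervalIntegral.integral_of_le zero_le_one, integral_Icc_eq_integral_Ioc]
  have h2 : ∫ s in Set.Icc (0:ℝ) l, h s = ∫ s in (0:ℝ)..l, h s := by
    rw [intervalIntegral.integral_of_le hl.le, integral_Icc_eq_integral_Ioc]
  rw [h1, h2, intervalIntegral.integral_comp_mul_left h hl.ne']
  simp [smul_eq_mul]

lemma inner_sq_eq (G₁ : ℝ → ℝ) (d : ℕ) {l : ℝ} (hl : 0 < l) :
    ∫ t in Set.Icc (0:ℝ) 1, (l ^ (d+1) * G₁ (l * t)) ^ 2
      = l ^ (2*d+1) * ∫ s in Set.Icc (0:ℝ) l, G₁ s ^ 2 := by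
  have : ∀ t : ℝ, (l ^ (d+1) * G₁ (l * t)) ^ 2 = l ^ (2*d+2) * (fun s => G₁ s ^ 2) (l * t) := by
    intro t; simp only [mul_pow, ← pow_mul]; ring_nf
  simp_rw [this]
  rw [integral_const_mul, scale_int (fun s => G₁ s ^ 2) hl, ← mul_assoc]
  congr 1
  rw [show 2*d+2 = (2*d+1)+1 by ring, pow_succ]
  field_simp

theorem stmt_13 (d : ℕ) (hd : 1 ≤ d) (G : ℝ → ℝ) (hpos : ∀ t, 0 ≤ G t)
    (hG : IntegrableOn (fun t => G t ^ 2) (Set.Icc (0 : ℝ) 1)) :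
    Real.sqrt
        (∫ t in Set.Icc (0 : ℝ) 1, ∫ l in Set.Icc (0 : ℝ) 1,
          (l ^ (d + 1) * G (l * t) - G t) ^ 2) ≥
      (1 - 1 / Real.sqrt (2 * d + 2)) *
        Real.sqrt (∫ t in Set.Icc (0 : ℝ) 1, G t ^ 2) ∧
    (1 - 1 / Real.sqrt (2 * d + 2)) *
        Real.sqrt (∫ t in Set.Icc (0 : ℝ) 1, G t ^ 2) ≥
      (1 - 1 / Real.sqrt (2 * d + 2)) * ∫ t in Set.Icc (0 : ℝ) 1, G t := by
  classical
  set S : Set ℝ := Set.Icc (0:ℝ) 1 with hS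
  set μ : Measure ℝ := volume.restrict S with hμ
  have hSm : MeasurableSet S := measurableSet_Icc
  have hprob : IsProbabilityMeasure μ := by
    constructor
    rw [hμ, Measure.restrict_apply_univ, hS, Real.volume_Icc]
    norm_num
  -- measurable representative
  have hGsq : G = fun t => Real.sqrt (G t ^ 2) := funext fun t => (Real.sqrt_sq (hpos t)).symm
  have hGsm : AEStronglyMeasurable G μ := by
    rw [hGsq]
    exact Real.continuous_sqrt.comp_aestronglyMeasurable hG.1
  set G₁ : ℝ → ℝ := fun s => |hGsm.mk G s| with hG₁def
  have hG₁m : Measurable G₁ := hGsm.measurable_mk.abs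
  have hG₁sm : StronglyMeasurable G₁ := hG₁m.stronglyMeasurable
  have hG₁pos : ∀ s, 0 ≤ G₁ s := fun s => abs_nonneg _
  have hae : ∀ᵐ s ∂μ, G s = G₁ s := by
    filter_upwards [hGsm.ae_eq_mk] with s hs
    rw [hG₁def]; simp only [← hs, abs_of_nonneg (hpos s)]
  have hN : volume ({s | G s ≠ G₁ s} ∩ S) = 0 := by
    have h := hae
    rw [ae_iff, hμ, Measure.restrict_apply' hSm] at h
    exact h
  have hI1int : IntegrableOn (fun t => G₁ t ^ 2) S := by
    apply hG.congr
    filter_upwards [hae] with s hs; rw [hs]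
  set I₁ : ℝ := ∫ t in S, G₁ t ^ 2 with hI₁def
  have hI₁nonneg : 0 ≤ I₁ := integral_nonneg fun t => sq_nonneg _
  have hIeq : ∫ t in S, G t ^ 2 = I₁ := by
    apply integral_congr_ae
    filter_upwards [hae] with s hs; rw [hs]
  -- product setup
  set ν : Measure (ℝ × ℝ) := μ.prod μ with hν
  set f : ℝ × ℝ → ℝ := fun p => p.2 ^ (d+1) * G₁ (p.2 * p.1) with hfdef
  have hfm : Measurable f :=
    (measurable_snd.pow_const _).mul (hG₁m.comp (measurable_snd.mul measurable_fst))
  have hmem : ∀ᵐ p ∂ν, p.1 ∈ S ∧ p.2 ∈ S := by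
    rw [ae_iff]
    have hsub : {p : ℝ × ℝ | ¬(p.1 ∈ S ∧ p.2 ∈ S)} ⊆ (Sᶜ ×ˢ Set.univ) ∪ (Set.univ ×ˢ Sᶜ) := by
      intro p hp
      rcases not_and_or.1 hp with h | h
      · exact Or.inl ⟨h, trivial⟩
      · exact Or.inr ⟨trivial, h⟩
    refine measure_mono_null hsub (le_antisymm ?_ zero_le)
    have hμSc : μ Sᶜ = 0 := by
      rw [hμ, Measure.restrict_apply' hSm]
      simp
    calc ν ((Sᶜ ×ˢ Set.univ) ∪ (Set.univ ×ˢ Sᶜ))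
        ≤ ν (Sᶜ ×ˢ Set.univ) + ν (Set.univ ×ˢ Sᶜ) := measure_union_le _ _
      _ = 0 := by rw [hν, Measure.prod_prod, Measure.prod_prod, hμSc]; simp
  -- integrability of f^2
  have haeInner : ∀ᵐ l ∂μ, Integrable (fun t => f (t, l) ^ 2) μ := by
    filter_upwards [ae_restrict_mem hSm] with l hl
    rcases eq_or_lt_of_le hl.1 with h0 | h0
    · have : (fun t => f (t, l) ^ 2) = fun _ => (0:ℝ) := by
        funext t; rw [hfdef]; simp [← h0]
      rw [this]; exact integrable_const 0
    · have : (fun t => f (t, l) ^ 2) = fun t => (l ^ (d+1)) ^ 2 * (fun s => G₁ s ^ 2) (l * t) := by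
        funext t; rw [hfdef]; simp only [mul_pow]
      rw [this]
      exact (integrable_scale _ hI1int h0 hl.2).const_mul _
  have hinner_le : ∀ l ∈ S, 0 < l → ∫ t, f (t, l) ^ 2 ∂μ ≤ l ^ (2*d+1) * I₁ := by
    intro l hl h0
    have heq : ∫ t, f (t, l) ^ 2 ∂μ = l ^ (2*d+1) * ∫ s in Set.Icc (0:ℝ) l, G₁ s ^ 2 :=
      inner_sq_eq G₁ d h0
    rw [heq, hI₁def]
    apply mul_le_mul_of_nonneg_left _ (by positivity)
    apply setIntegral_mono_set hI1int
    · filter_upwards with s using sq_nonneg _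
    · exact HasSubset.Subset.eventuallyLE (Set.Icc_subset_Icc le_rfl hl.2)
  have hf2 : Integrable (fun p => f p ^ 2) ν := by
    rw [hν]
    refine (integrable_prod_iff' ((hfm.pow_const 2).aestronglyMeasurable)).2 ⟨haeInner, ?_⟩
    apply Integrable.mono' (integrable_const I₁)
      (((hfm.pow_const 2).norm.stronglyMeasurable.integral_prod_left').aestronglyMeasurable)
    filter_upwards [ae_restrict_mem hSm] with l hl
    have hnorm : (fun t => ‖f (t, l) ^ 2‖) = fun t => f (t, l) ^ 2 := by
      funext t; rw [Real.norm_eq_abs, abs_of_nonneg (sq_nonneg _)]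
    rw [Real.norm_eq_abs, hnorm, abs_of_nonneg (integral_nonneg fun t => sq_nonneg _)]
    rcases eq_or_lt_of_le hl.1 with h0 | h0
    · have : (fun t => f (t, l) ^ 2) = fun _ => (0:ℝ) := by
        funext t; rw [hfdef]; simp [← h0]
      rw [this]; simp [hI₁nonneg]
    · calc ∫ t, f (t, l) ^ 2 ∂μ ≤ l ^ (2*d+1) * I₁ := hinner_le l hl h0
        _ ≤ 1 * I₁ := by
            apply mul_le_mul_of_nonneg_right _ hI₁nonneg
            exact pow_le_one₀ hl.1 hl.2
        _ = I₁ := one_mul _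
  -- the J bound
  set J : ℝ := ∫ p, f p ^ 2 ∂ν with hJdef
  have hJnonneg : 0 ≤ J := integral_nonneg fun p => sq_nonneg _
  have hJle : J ≤ I₁ / (2*d+2) := by
    have hswap : J = ∫ l, (∫ t, f (t, l) ^ 2 ∂μ) ∂μ := by
      rw [hJdef, hν]; exact integral_prod_symm _ (by rw [← hν]; exact hf2)
    rw [hswap]
    have hmono : ∫ l, (∫ t, f (t, l) ^ 2 ∂μ) ∂μ ≤ ∫ l, l ^ (2*d+1) * I₁ ∂μ := by
      apply integral_mono_of_nonneg
      · filter_upwards with l using integral_nonneg fun t => sq_nonneg _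
      · rw [hμ]; exact ((continuous_pow (2*d+1)).mul continuous_const).integrableOn_Icc
      · filter_upwards [ae_restrict_mem hSm] with l hl
        rcases eq_or_lt_of_le hl.1 with h0 | h0
        · have : (fun t => f (t, l) ^ 2) = fun _ => (0:ℝ) := by
            funext t; rw [hfdef]; simp [← h0]
          rw [this]; simp [← h0, mul_nonneg (pow_nonneg hl.1 _) hI₁nonneg]
        · exact hinner_le l hl h0
    refine hmono.trans ?_
    have : ∫ l, l ^ (2*d+1) * I₁ ∂μ = (∫ l in (0:ℝ)..1, l ^ (2*d+1)) * I₁ := by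
      rw [intervalIntegral.integral_of_le zero_le_one, hμ, hS,
        integral_Icc_eq_integral_Ioc, ← integral_mul_const]
    rw [this, integral_pow]
    have h0p : (0:ℝ) ^ (2*d+1+1) = 0 := by simp
    rw [one_pow, h0p, sub_zero]
    push_cast
    rw [show (2*(d:ℝ)+1+1) = 2*(d:ℝ)+2 by ring, div_mul_eq_mul_div, one_mul]
  -- g integrability and value
  set g : ℝ × ℝ → ℝ := fun p => G₁ p.1 with hgdef
  have hgm : Measurable g := hG₁m.comp measurable_fst
  have hg2 : Integrable (fun p => g p ^ 2) ν := by
    rw [hν]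
    refine (integrable_prod_iff ((hgm.pow_const 2).aestronglyMeasurable)).2 ⟨?_, ?_⟩
    · filter_upwards with t
      simp only [hgdef]
      exact integrable_const _
    · apply Integrable.congr hI1int
      filter_upwards with t
      simp only [hgdef, Real.norm_eq_abs, abs_of_nonneg (sq_nonneg (G₁ t))]
      rw [integral_const]
      simp
  have hgI : ∫ p, g p ^ 2 ∂ν = I₁ := by
    rw [hν, integral_prod _ (by rw [← hν]; exact hg2)]
    simp [hgdef, integral_const, hI₁def]
    rfl
  -- f*g integrable
  have hfg : Integrable (fun p => f p * g p) ν := by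
    apply Integrable.mono' ((hf2.add hg2).div_const 2) (hfm.mul hgm).aestronglyMeasurable
    filter_upwards with p
    simp only [Pi.add_apply, Pi.mul_apply]
    rw [Real.norm_eq_abs, abs_mul]
    nlinarith [sq_nonneg (|f p| - |g p|), sq_abs (f p), sq_abs (g p), abs_nonneg (f p),
      abs_nonneg (g p)]
  -- Cauchy-Schwarz
  set K : ℝ := ∫ p, f p * g p ∂ν with hKdef
  have hK : K ≤ Real.sqrt J * Real.sqrt I₁ := by
    rw [hKdef, hJdef, ← hgI]
    apply cauchy_schwarz_int ν f g hfm.aestronglyMeasurable hgm.aestronglyMeasurable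
    · filter_upwards [hmem] with p hp
      exact mul_nonneg (pow_nonneg hp.2.1 _) (hG₁pos _)
    · filter_upwards with p using hG₁pos _
    · exact hf2
    · exact hg2
  -- expand the square
  have hsub : Integrable (fun p => (f p - g p) ^ 2) ν := by
    have : (fun p => (f p - g p) ^ 2) = fun p => f p ^ 2 - 2 * (f p * g p) + g p ^ 2 := by
      funext p; ring
    rw [this]
    exact (hf2.sub (hfg.const_mul 2)).add hg2
  set A : ℝ := ∫ p, (f p - g p) ^ 2 ∂ν with hAdef
  have hfg2 : Integrable (fun p => 2 * (f p * g p)) ν := hfg.const_mul 2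
  have hsub2 : Integrable (fun p => f p ^ 2 - 2 * (f p * g p)) ν := hf2.sub hfg2
  have hAexp : A = J - 2 * K + I₁ := by
    rw [hAdef]
    have heq2 : (fun p => (f p - g p) ^ 2) = fun p => (f p ^ 2 - 2 * (f p * g p)) + g p ^ 2 := by
      funext p; ring
    rw [heq2, integral_add hsub2 hg2, integral_sub hf2 hfg2, integral_const_mul, hgI,
      ← hJdef, ← hKdef]
  have hJI : J ≤ I₁ := by
    refine hJle.trans ?_
    rw [div_le_iff₀ (by positivity)]
    nlinarith [hI₁nonneg]
  have hA_ge : (Real.sqrt I₁ - Real.sqrt J) ^ 2 ≤ A := by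
    have h1 : Real.sqrt I₁ ^ 2 = I₁ := Real.sq_sqrt hI₁nonneg
    have h2 : Real.sqrt J ^ 2 = J := Real.sq_sqrt hJnonneg
    nlinarith [hK, hAexp]
  have hsqrtA : Real.sqrt I₁ - Real.sqrt J ≤ Real.sqrt A := by
    have h0 : 0 ≤ Real.sqrt I₁ - Real.sqrt J :=
      sub_nonneg.2 (Real.sqrt_le_sqrt hJI)
    calc Real.sqrt I₁ - Real.sqrt J = Real.sqrt ((Real.sqrt I₁ - Real.sqrt J) ^ 2) :=
          (Real.sqrt_sq h0).symm
      _ ≤ Real.sqrt A := Real.sqrt_le_sqrt hA_ge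
  have hsqrtJ : Real.sqrt J ≤ Real.sqrt I₁ / Real.sqrt (2*d+2) := by
    calc Real.sqrt J ≤ Real.sqrt (I₁ / (2*d+2)) := Real.sqrt_le_sqrt hJle
      _ = Real.sqrt I₁ / Real.sqrt (2*d+2) := Real.sqrt_div hI₁nonneg _
  have hmain : (1 - 1 / Real.sqrt (2*d+2)) * Real.sqrt I₁ ≤ Real.sqrt A := by
    have e : (1 - 1 / Real.sqrt (2*d+2)) * Real.sqrt I₁
        = Real.sqrt I₁ - Real.sqrt I₁ / Real.sqrt (2*d+2) := by ring
    rw [e]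
    linarith [hsqrtA, hsqrtJ]
  -- iterated form with G₁
  have hAit : A = ∫ t in S, ∫ l in S, (l ^ (d+1) * G₁ (l * t) - G₁ t) ^ 2 := by
    rw [hAdef, hν, integral_prod _ (by rw [← hν]; exact hsub)]
  -- transfer G₁ to G in the iterated integral
  have hzero_ae : ∀ᵐ t ∂μ, t ≠ 0 := by
    rw [ae_iff]
    have : {t : ℝ | ¬ t ≠ 0} = {0} := by ext t; simp
    rw [this, hμ, Measure.restrict_apply' hSm]
    exact measure_mono_null Set.inter_subset_left (Real.volume_singleton)
  have hiter : (∫ t in S, ∫ l in S, (l ^ (d+1) * G (l * t) - G t) ^ 2)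
      = ∫ t in S, ∫ l in S, (l ^ (d+1) * G₁ (l * t) - G₁ t) ^ 2 := by
    apply integral_congr_ae
    filter_upwards [hae, ae_restrict_mem hSm, hzero_ae] with t ht htS htne
    apply integral_congr_ae
    have hnull : μ {l | G (l * t) ≠ G₁ (l * t)} = 0 := by
      rw [hμ, Measure.restrict_apply' hSm]
      have hpre : volume ((fun l => l * t) ⁻¹' ({s | G s ≠ G₁ s} ∩ S)) = 0 := by
        rw [Real.volume_preimage_mul_right htne, hN, mul_zero]
      refine measure_mono_null ?_ hpre
      rintro l ⟨hlbad, hlS⟩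
      refine ⟨hlbad, ?_, ?_⟩
      · exact mul_nonneg hlS.1 htS.1
      · calc l * t ≤ 1 * 1 := mul_le_mul hlS.2 htS.2 htS.1 zero_le_one
          _ = 1 := one_mul 1
    have : ∀ᵐ l ∂μ, G (l * t) = G₁ (l * t) := by
      rw [ae_iff]
      exact hnull
    filter_upwards [this] with l hl
    rw [hl, ht]
  -- second part: sqrt(I) >= ∫ G
  have hc : 0 ≤ 1 - 1 / Real.sqrt (2*d+2) := by
    have h1 : (1:ℝ) ≤ Real.sqrt (2*d+2) := by
      rw [show (1:ℝ) = Real.sqrt 1 by simp]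
      apply Real.sqrt_le_sqrt
      have : (1:ℝ) ≤ (d:ℝ) := by exact_mod_cast hd
      linarith
    have h2 : 1 / Real.sqrt (2*d+2) ≤ 1 := by
      rw [div_le_one (by linarith)]
      exact h1
    linarith
  have hGint : ∫ t in S, G t = ∫ t in S, G₁ t := by
    apply integral_congr_ae
    filter_upwards [hae] with t ht; exact ht
  have hsqrtI : ∫ t in S, G t ≤ Real.sqrt I₁ := by
    rw [hGint]
    have := cauchy_schwarz_int μ G₁ (fun _ => 1) hG₁m.aestronglyMeasurable
      aestronglyMeasurable_const (Filter.Eventually.of_forall hG₁pos)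
      (Filter.Eventually.of_forall fun _ => zero_le_one) hI1int
      (by simp only [one_pow]; exact integrable_const (1:ℝ))
    simp only [mul_one, one_pow] at this
    calc ∫ t in S, G₁ t = ∫ t, G₁ t ∂μ := rfl
      _ ≤ Real.sqrt (∫ t, G₁ t ^ 2 ∂μ) * Real.sqrt (∫ _t, (1:ℝ) ∂μ) := this
      _ = Real.sqrt I₁ := by
          rw [integral_const]
          simp [hI₁def]
          rfl
  constructor
  · rw [ge_iff_le, hIeq, hiter, ← hAit]
    exact hmain
  · rw [ge_iff_le, hIeq]
    exact mul_le_mul_of_nonneg_left hsqrtI hc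
end

section
/- Let $d \ge 1$, let $F : \mathbb{D}_d \to \mathcal{H}$ be a continuous function into a Hilbert space satisfying the invariant mean-value property $F(z) = \frac{1}{\mu_{\mathbb{D}_d}(B(z,r))}\int_{B(z,r)} F\, d\mu_{\mathbb{D}_d}$ for all $z \in \mathbb{D}_d$ and $r>0$, and assume $\int_{\mathbb{D}_d} e^{-s\,d_B(z,x)}\|F(x)\|\, d\mu_{\mathbb{D}_d}(x) < \infty$. Then for any $s > 0$, $R > 0$, $z \in \mathbb{D}_d$: $\int_{B(z,R)} e^{-s\,d_B(z,x)} F(x)\, d\mu_{\mathbb{D}_d}(x) = F(z) \int_{B(z,R)} e^{-s\,d_B(z,x)}\, d\mu_{\mathbb{D}_d}(x)$. -/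
open MeasureTheory
open scoped BigOperators Classical ComplexConjugate

/-- The pairing `x ⋅ ȳ = ∑ xₖ conj(yₖ)` on `ℂ^d`. -/
noncomputable def dotc {d : ℕ} (x y : EuclideanSpace ℂ (Fin d)) : ℂ :=
  ∑ i, x i * (starRingEnd ℂ) (y i)

/-- The involutive Möbius automorphism of the unit ball interchanging `z` and `0`. -/
noncomputable def moebius {d : ℕ} (z x : EuclideanSpace ℂ (Fin d)) :
    EuclideanSpace ℂ (Fin d) :=
  if z = 0 then -x
  else
    (1 - dotc x z)⁻¹ •
      (z - (dotc x z / ((‖z‖ : ℂ) ^ 2)) • z -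
        ((Real.sqrt (1 - ‖z‖ ^ 2) : ℝ) : ℂ) •
          (x - (dotc x z / ((‖z‖ : ℂ) ^ 2)) • z))

/-- The Bergman (hyperbolic) distance on the unit ball of `ℂ^d`:
`d_B(z,x) = log((1+|φ_z(x)|)/(1-|φ_z(x)|))`. -/
noncomputable def bergDist {d : ℕ} (z x : EuclideanSpace ℂ (Fin d)) : ℝ :=
  Real.log ((1 + ‖moebius z x‖) / (1 - ‖moebius z x‖))

/-- The hyperbolic ball of radius `R` centered at `z`. -/
def bergBall {d : ℕ} (z : EuclideanSpace ℂ (Fin d)) (R : ℝ) :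
    Set (EuclideanSpace ℂ (Fin d)) :=
  {x | bergDist z x < R}

lemma dotc_eq_inner {d : ℕ} (x z : EuclideanSpace ℂ (Fin d)) :
    dotc x z = @inner ℂ _ _ z x := by
  simp [dotc, PiLp.inner_apply, RCLike.inner_apply, mul_comm]

lemma norm_dotc_le {d : ℕ} (x z : EuclideanSpace ℂ (Fin d)) :
    ‖dotc x z‖ ≤ ‖z‖ * ‖x‖ := by
  rw [dotc_eq_inner]
  exact norm_inner_le_norm z x

lemma moebius_identity {d : ℕ} (z x : EuclideanSpace ℂ (Fin d)) (hz : ‖z‖ < 1)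
    (hx : ‖x‖ < 1) :
    (1 - ‖moebius z x‖ ^ 2) * ‖(1:ℂ) - dotc x z‖ ^ 2 = (1 - ‖z‖ ^ 2) * (1 - ‖x‖ ^ 2) := by
  by_cases hz0 : z = 0
  · subst hz0
    have h0 : dotc x (0 : EuclideanSpace ℂ (Fin d)) = 0 := by
      simp [dotc]
    simp [moebius, h0, norm_neg]
  · set c : ℂ := dotc x z with hc
    have hcin : c = @inner ℂ _ _ z x := dotc_eq_inner x z
    have hA : (0:ℝ) < ‖z‖ := norm_pos_iff.mpr hz0
    set tC : ℂ := ((‖z‖ : ℂ)) ^ 2 with htC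
    have htC0 : tC ≠ 0 := by
      rw [htC]
      exact pow_ne_zero 2 (Complex.ofReal_ne_zero.mpr hA.ne')
    have htconj : conj tC = tC := by
      simp [htC, ← Complex.ofReal_pow]
    set p : EuclideanSpace ℂ (Fin d) := (c / tC) • z with hp
    have hzz : @inner ℂ _ _ z z = tC := by
      rw [inner_self_eq_norm_sq_to_K]; simp [htC]
    have hzp : @inner ℂ _ _ z p = c := by
      rw [hp, inner_smul_right, hzz, div_mul_cancel₀ _ htC0]
    have hzx : @inner ℂ _ _ z x = c := hcin.symm
    have hpx : @inner ℂ _ _ p x = conj c * c / tC := by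
      rw [hp, inner_smul_left, hzx, map_div₀, htconj]
      ring
    have hpp : @inner ℂ _ _ p p = conj c * c / tC := by
      rw [hp, inner_smul_left, hzp, map_div₀, htconj]
      ring
    have horth : @inner ℂ _ _ (z - p) (x - p) = 0 := by
      rw [inner_sub_left, inner_sub_right, inner_sub_right, hzx, hzp, hpx, hpp]
      ring
    set σ : ℂ := ((Real.sqrt (1 - ‖z‖ ^ 2) : ℝ) : ℂ) with hσ
    have hσsq : ‖σ‖ ^ 2 = 1 - ‖z‖ ^ 2 := by
      rw [hσ, Complex.norm_real, Real.norm_eq_abs, abs_of_nonneg (Real.sqrt_nonneg _),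
        Real.sq_sqrt (by nlinarith)]
    have hmz : moebius z x = (1 - c)⁻¹ • ((z - p) - σ • (x - p)) := by
      rw [moebius, if_neg hz0]
    have hNsq : ‖(z - p) - σ • (x - p)‖ ^ 2
        = ‖z - p‖ ^ 2 + (1 - ‖z‖ ^ 2) * ‖x - p‖ ^ 2 := by
      rw [@norm_sub_sq ℂ _ _ _ _, inner_smul_right, horth, norm_smul, mul_pow, hσsq]
      simp
      try ring
    -- norms of the pieces
    have hzp_eq : z - p = ((1 : ℂ) - c / tC) • z := by
      rw [hp, sub_smul, one_smul]
    have hnormzp : ‖z - p‖ ^ 2 = ‖tC - c‖ ^ 2 / ‖z‖ ^ 2 := by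
      rw [hzp_eq, norm_smul, mul_pow]
      have : (1 : ℂ) - c / tC = (tC - c) / tC := by field_simp
      rw [this, norm_div]
      have : ‖tC‖ = ‖z‖ ^ 2 := by simp [htC]
      rw [this]
      field_simp
    have hxp : ‖x - p‖ ^ 2 = ‖x‖ ^ 2 - ‖c‖ ^ 2 / ‖z‖ ^ 2 := by
      rw [@norm_sub_sq ℂ _ _ _ _]
      have h1 : @inner ℂ _ _ x p = c / tC * conj c := by
        rw [hp, inner_smul_right, ← inner_conj_symm, hzx]
      have h2 : RCLike.re (c / tC * conj c) = ‖c‖ ^ 2 / ‖z‖ ^ 2 := by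
        have e : c / tC * conj c = ((‖c‖ ^ 2 / ‖z‖ ^ 2 : ℝ) : ℂ) := by
          rw [htC, div_mul_eq_mul_div, Complex.mul_conj']
          push_cast
          ring
        rw [e]
        exact Complex.ofReal_re _
      have h3 : ‖p‖ ^ 2 = ‖c‖ ^ 2 / ‖z‖ ^ 2 := by
        rw [hp, norm_smul, mul_pow, norm_div]
        have : ‖tC‖ = ‖z‖ ^ 2 := by simp [htC]
        rw [this]
        field_simp
      rw [h1, h2, h3]
      ring
    have hsq : ∀ w : ℂ, ‖w‖ ^ 2 = w.re ^ 2 + w.im ^ 2 := by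
      intro w
      rw [← Complex.normSq_eq_norm_sq, Complex.normSq_apply]
      ring
    have hcle : ‖c‖ < 1 := lt_of_le_of_lt (norm_dotc_le x z) (by nlinarith)
    have h1c0 : (1:ℂ) - c ≠ 0 := by
      intro h
      rw [sub_eq_zero] at h
      rw [← h] at hcle
      simp at hcle
    have hB : (0:ℝ) < ‖(1:ℂ) - c‖ ^ 2 := pow_pos (norm_pos_iff.mpr h1c0) 2
    have hmob : ‖moebius z x‖ ^ 2 = ‖z - p - σ • (x - p)‖ ^ 2 / ‖(1:ℂ) - c‖ ^ 2 := by
      rw [hmz, norm_smul, mul_pow, norm_inv]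
      field_simp
    have hz2 : (‖z‖:ℝ) ^ 2 ≠ 0 := by positivity
    have key : ‖(1:ℂ) - c‖ ^ 2 - ‖z - p - σ • (x - p)‖ ^ 2
        = (1 - ‖z‖ ^ 2) * (1 - ‖x‖ ^ 2) := by
      rw [hNsq, hnormzp, hxp, hsq ((1:ℂ) - c), hsq (tC - c), hsq c]
      simp only [htC, ← Complex.ofReal_pow, Complex.sub_re, Complex.sub_im,
        Complex.one_re, Complex.one_im, Complex.ofReal_re, Complex.ofReal_im]
      field_simp
      ring
    calc (1 - ‖moebius z x‖ ^ 2) * ‖(1:ℂ) - c‖ ^ 2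
        = ‖(1:ℂ) - c‖ ^ 2 - ‖z - p - σ • (x - p)‖ ^ 2 := by
          rw [hmob, sub_mul, one_mul, div_mul_cancel₀ _ hB.ne']
      _ = (1 - ‖z‖ ^ 2) * (1 - ‖x‖ ^ 2) := key

lemma bergBall_norm_bound {d : ℕ} (z x : EuclideanSpace ℂ (Fin d)) (hz : ‖z‖ < 1)
    (hx : ‖x‖ < 1) {R : ℝ} (hR : 0 < R) (hxR : bergDist z x < R) :
    Real.exp (-R) * (1 - ‖z‖) ^ 2 < 1 - ‖x‖ ^ 2 := by
  set a := ‖moebius z x‖ with ha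
  set c := dotc x z with hc
  have hid := moebius_identity z x hz hx
  have ha0 : 0 ≤ a := norm_nonneg _
  have hz0 : 0 ≤ ‖z‖ := norm_nonneg _
  have hx0 : 0 ≤ ‖x‖ := norm_nonneg _
  have hB0 : 0 < ‖(1:ℂ) - c‖ := by
    have h1 : ‖c‖ ≤ ‖z‖ := le_trans (norm_dotc_le x z) (by nlinarith)
    have h2 : ‖(1:ℂ)‖ - ‖c‖ ≤ ‖(1:ℂ) - c‖ := norm_sub_norm_le _ _
    simp only [norm_one] at h2
    linarith
  have hz2pos : 0 < 1 - ‖z‖ ^ 2 := by nlinarith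
  have hx2pos : 0 < 1 - ‖x‖ ^ 2 := by nlinarith
  have hrhs : 0 < (1 - ‖z‖ ^ 2) * (1 - ‖x‖ ^ 2) := mul_pos hz2pos hx2pos
  have ha2 : 0 < 1 - a ^ 2 := by
    rcases lt_or_ge 0 (1 - a^2) with h | h
    · exact h
    · exfalso
      nlinarith [pow_pos hB0 2]
  have ha1 : a < 1 := by nlinarith
  have haR : Real.exp (-R) < 1 - a := by
    have hpos : 0 < (1 + a) / (1 - a) := div_pos (by linarith) (by linarith)
    have hlt : (1 + a) / (1 - a) < Real.exp R := by
      rw [← Real.log_lt_iff_lt_exp hpos]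
      exact hxR
    have h2 : 1 + a < Real.exp R * (1 - a) := (div_lt_iff₀ (by linarith)).mp hlt
    have h3 : Real.exp (-R) * Real.exp R = 1 := by rw [← Real.exp_add]; simp
    nlinarith [Real.exp_pos (-R), Real.exp_pos R]
  have hBz : 1 - ‖z‖ ≤ ‖(1:ℂ) - c‖ := by
    have h1 : ‖c‖ ≤ ‖z‖ := le_trans (norm_dotc_le x z) (by nlinarith)
    have h2 : ‖(1:ℂ)‖ - ‖c‖ ≤ ‖(1:ℂ) - c‖ := norm_sub_norm_le _ _
    simp only [norm_one] at h2
    linarith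
  have hzp2 : (0:ℝ) < (1 - ‖z‖) ^ 2 := pow_pos (by linarith) 2
  have s1 : Real.exp (-R) * (1 - ‖z‖) ^ 2 < (1 - a) * (1 - ‖z‖) ^ 2 :=
    mul_lt_mul_of_pos_right haR hzp2
  have hsq2 : (1 - ‖z‖) ^ 2 ≤ ‖(1:ℂ) - c‖ ^ 2 := pow_le_pow_left₀ (by linarith) hBz 2
  have h1a : (1 - a) ≤ 1 - a ^ 2 := by nlinarith
  have s2 : (1 - a) * (1 - ‖z‖) ^ 2 ≤ (1 - a ^ 2) * ‖(1:ℂ) - c‖ ^ 2 :=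
    mul_le_mul h1a hsq2 (le_of_lt hzp2) (by linarith)
  have s4 : (1 - ‖z‖ ^ 2) * (1 - ‖x‖ ^ 2) ≤ 1 - ‖x‖ ^ 2 :=
    mul_le_of_le_one_left (le_of_lt hx2pos) (by nlinarith)
  have s3 : (1 - a ^ 2) * ‖(1:ℂ) - c‖ ^ 2 = (1 - ‖z‖ ^ 2) * (1 - ‖x‖ ^ 2) := hid
  linarith

lemma bergDist_nonneg {d : ℕ} (z x : EuclideanSpace ℂ (Fin d)) : 0 ≤ bergDist z x := by
  unfold bergDist
  set a := ‖moebius z x‖ with ha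
  have ha0 : 0 ≤ a := norm_nonneg _
  rcases lt_trichotomy a 1 with h | h | h
  · exact Real.log_nonneg ((le_div_iff₀ (by linarith)).2 (by linarith))
  · simp [h]
  · have : (1 + a) / (1 - a) = -((1 + a) / (a - 1)) := by
      have h1 : a - 1 ≠ 0 := by linarith
      have h2 : (1:ℝ) - a ≠ 0 := by linarith
      field_simp
      ring
    rw [this, Real.log_neg_eq_log]
    exact Real.log_nonneg ((le_div_iff₀ (by linarith)).2 (by linarith))

lemma measurable_dotc {d : ℕ} (z : EuclideanSpace ℂ (Fin d)) :
    Measurable (fun x => dotc x z) := by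
  unfold dotc
  exact Finset.measurable_sum _ (fun i _ =>
    ((EuclideanSpace.proj i : EuclideanSpace ℂ (Fin d) →L[ℂ] ℂ).continuous.measurable).mul_const _)

lemma measurable_moebius {d : ℕ} (z : EuclideanSpace ℂ (Fin d)) :
    Measurable (moebius z) := by
  unfold moebius
  by_cases hz : z = 0
  · simp only [hz, if_true]; exact measurable_id.neg
  · simp only [hz, if_false]
    have hm : Measurable (fun x : EuclideanSpace ℂ (Fin d) => dotc x z) := measurable_dotc z
    apply Measurable.fun_smul
    · exact ((measurable_const.sub hm).inv)
    · exact ((measurable_const.sub ((hm.div_const _).smul_const _)).sub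
        (((measurable_id.sub ((hm.div_const _).smul_const _))).fun_const_smul _))

lemma measurable_bergDist {d : ℕ} (z : EuclideanSpace ℂ (Fin d)) :
    Measurable (bergDist z) := by
  unfold bergDist
  have h : Measurable (fun x => ‖moebius z x‖) := (measurable_moebius z).norm
  exact ((h.const_add 1).div (h.const_sub 1)).log

lemma measurableSet_bergBall {d : ℕ} (z : EuclideanSpace ℂ (Fin d)) (R : ℝ) :
    MeasurableSet (bergBall z R) :=
  (measurable_bergDist z) measurableSet_Iio

lemma hypMeasure_bergBall_ne_top {d : ℕ} (z : EuclideanSpace ℂ (Fin d)) (hz : ‖z‖ < 1)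
    {R : ℝ} (hR : 0 < R) : hypMeasure d (bergBall z R) ≠ ⊤ := by
  classical
  set B1 := Metric.ball (0 : EuclideanSpace ℂ (Fin d)) 1 with hB1
  set S := bergBall z R with hSdef
  have hS : MeasurableSet S := measurableSet_bergBall z R
  set δ : ℝ := Real.exp (-R) * (1 - ‖z‖) ^ 2 with hδ
  have hδ0 : 0 < δ := mul_pos (Real.exp_pos _) (pow_pos (by linarith) 2)
  set C : ENNReal := ENNReal.ofReal ((δ ^ (d + 1))⁻¹) with hC
  have hbound : ∀ x ∈ S ∩ B1,
      ENNReal.ofReal ((1 - ‖x‖ ^ 2) ^ (d + 1))⁻¹ ≤ C := by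
    rintro x ⟨hxS, hxB⟩
    have hx1 : ‖x‖ < 1 := by rwa [hB1, mem_ball_zero_iff] at hxB
    have hlt : δ < 1 - ‖x‖ ^ 2 := bergBall_norm_bound z x hz hx1 hR hxS
    have hple : δ ^ (d + 1) ≤ (1 - ‖x‖ ^ 2) ^ (d + 1) :=
      pow_le_pow_left₀ (le_of_lt hδ0) (le_of_lt hlt) _
    have : ((1 - ‖x‖ ^ 2) ^ (d + 1))⁻¹ ≤ (δ ^ (d + 1))⁻¹ :=
      inv_anti₀ (pow_pos hδ0 _) hple
    exact ENNReal.ofReal_le_ofReal this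
  have hvol1 : volume B1 ≠ ⊤ := measure_ball_lt_top.ne
  have hvol0 : volume B1 ≠ 0 := (Metric.measure_ball_pos _ _ one_pos).ne'
  have key : hypMeasure d S
      ≤ (volume B1)⁻¹ * (C * volume B1) := by
    rw [hypMeasure, withDensity_apply _ hS, Measure.restrict_smul,
      Measure.restrict_restrict hS, lintegral_smul_measure]
    refine mul_le_mul_right ?_ _
    calc ∫⁻ x in S ∩ B1, ENNReal.ofReal ((1 - ‖x‖ ^ 2) ^ (d + 1))⁻¹ ∂volume
        ≤ ∫⁻ _ in S ∩ B1, C ∂volume :=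
          setLIntegral_mono measurable_const hbound
      _ = C * volume (S ∩ B1) := setLIntegral_const _ _
      _ ≤ C * volume B1 := mul_le_mul_right (measure_mono Set.inter_subset_right) _
  refine ne_top_of_le_ne_top ?_ key
  exact ENNReal.mul_ne_top (ENNReal.inv_ne_top.mpr hvol0)
    (ENNReal.mul_ne_top ENNReal.ofReal_ne_top hvol1)


lemma exp_layer {s R τ : ℝ} (hs : 0 < s) (hτ0 : 0 ≤ τ) (hτR : τ < R) :
    ∫ r in Set.Ioo 0 R, ({q : ℝ | τ < q}.indicator (fun r => s * Real.exp (-(s * r))) r)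
      = Real.exp (-(s * τ)) - Real.exp (-(s * R)) := by
  have hset : {q : ℝ | τ < q} = Set.Ioi τ := rfl
  rw [hset, integral_indicator measurableSet_Ioi, Measure.restrict_restrict measurableSet_Ioi]
  have hinter : Set.Ioi τ ∩ Set.Ioo 0 R = Set.Ioo τ R := by
    ext r
    simp only [Set.mem_inter_iff, Set.mem_Ioi, Set.mem_Ioo]
    constructor
    · rintro ⟨h1, _, h3⟩; exact ⟨h1, h3⟩
    · rintro ⟨h1, h2⟩; exact ⟨h1, lt_of_le_of_lt hτ0 h1, h2⟩
  rw [hinter, ← integral_Ioc_eq_integral_Ioo, ← intervalIntegral.integral_of_le hτR.le]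
  have hderiv : ∀ r ∈ Set.uIcc τ R, HasDerivAt (fun u => -Real.exp (-(s * u)))
      (s * Real.exp (-(s * r))) r := by
    intro r _
    have h1 : HasDerivAt (fun u : ℝ => -(s * u)) (-s) r := by
      simpa using ((hasDerivAt_id' r).const_mul s).fun_neg
    have h2 := h1.exp
    refine h2.fun_neg.congr_deriv ?_
    ring
  have hcont : IntervalIntegrable (fun r => s * Real.exp (-(s * r))) volume τ R :=
    (Continuous.intervalIntegrable (by continuity)) _ _
  rw [intervalIntegral.integral_eq_sub_of_hasDerivAt hderiv hcont]
  ring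

lemma layer {α : Type*} [MeasurableSpace α] (μ : Measure α) (t : α → ℝ)
    (ht : Measurable t) (ht0 : ∀ x, 0 ≤ t x) {s R : ℝ} (hs : 0 < s) (hR : 0 < R)
    {H : Type*} [NormedAddCommGroup H] [NormedSpace ℝ H] [CompleteSpace H]
    (G : α → H) (hGm : StronglyMeasurable G)
    (hG : Integrable G (μ.restrict {x | t x < R}))
    (hfin : μ {x | t x < R} ≠ ⊤) :
    ∫ x in {x | t x < R}, Real.exp (-(s * t x)) • G x ∂μ
      = Real.exp (-(s * R)) • ∫ x in {x | t x < R}, G x ∂μ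
        + ∫ r in Set.Ioo 0 R,
            (s * Real.exp (-(s * r))) • (∫ x in {x | t x < r}, G x ∂μ) := by
  have hSR : MeasurableSet {x | t x < R} := measurableSet_lt ht measurable_const
  haveI : IsFiniteMeasure (μ.restrict {x | t x < R}) :=
    ⟨by rw [Measure.restrict_apply_univ]; exact lt_top_iff_ne_top.mpr hfin⟩
  set ν := μ.restrict {x | t x < R} with hν
  -- integrability of the two pieces
  have hmeas1 : AEStronglyMeasurable
      (fun x => (Real.exp (-(s * t x)) - Real.exp (-(s * R))) • G x) ν := by
    exact (((Real.measurable_exp.comp (measurable_const.mul ht).neg).sub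
      measurable_const).aestronglyMeasurable).smul hGm.aestronglyMeasurable
  have hInt2 : Integrable (fun x => (Real.exp (-(s * t x)) - Real.exp (-(s * R))) • G x) ν := by
    refine Integrable.mono' hG.norm hmeas1 ?_
    filter_upwards [ae_restrict_mem hSR] with x hx
    rw [norm_smul, Real.norm_eq_abs]
    have h1 : Real.exp (-(s * t x)) ≤ 1 := Real.exp_le_one_iff.mpr (by nlinarith [ht0 x])
    have hx' : t x < R := hx
    have h2 : Real.exp (-(s * R)) ≤ Real.exp (-(s * t x)) :=
      Real.exp_le_exp.mpr (by nlinarith)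
    have h3 : |Real.exp (-(s * t x)) - Real.exp (-(s * R))| ≤ 1 := by
      rw [abs_of_nonneg (by linarith)]
      nlinarith [Real.exp_pos (-(s * R))]
    nlinarith [norm_nonneg (G x)]
  have hInt1 : Integrable (fun x => Real.exp (-(s * R)) • G x) ν := hG.smul _
  have hsplit : ∫ x in {x | t x < R}, Real.exp (-(s * t x)) • G x ∂μ
      = Real.exp (-(s * R)) • ∫ x in {x | t x < R}, G x ∂μ
        + ∫ x in {x | t x < R}, (Real.exp (-(s * t x)) - Real.exp (-(s * R))) • G x ∂μ := by
    rw [← integral_smul, ← integral_add hInt1 hInt2]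
    congr 1
    funext x
    rw [← add_smul]
    congr 1
    ring
  rw [hsplit]
  congr 1
  -- now the layered part
  have hpt : ∀ x ∈ {x | t x < R}, (Real.exp (-(s * t x)) - Real.exp (-(s * R))) • G x
      = (∫ r in Set.Ioo 0 R,
          ({q : ℝ | t x < q}.indicator (fun r => s * Real.exp (-(s * r))) r)) • G x := by
    intro x hx
    rw [exp_layer hs (ht0 x) hx]
  rw [setIntegral_congr_fun hSR hpt]
  have hswap : ∫ x in {x | t x < R},
      (∫ r in Set.Ioo 0 R, ({q : ℝ | t x < q}.indicator (fun r => s * Real.exp (-(s * r))) r)) • G x ∂μ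
      = ∫ r in Set.Ioo 0 R, ∫ x in {x | t x < R},
          ({q : ℝ | t x < q}.indicator (fun r => s * Real.exp (-(s * r))) r) • G x ∂μ := by
    have heq : ∀ x, (∫ r in Set.Ioo 0 R,
        ({q : ℝ | t x < q}.indicator (fun r => s * Real.exp (-(s * r))) r)) • G x
        = ∫ r in Set.Ioo 0 R,
            ({q : ℝ | t x < q}.indicator (fun r => s * Real.exp (-(s * r))) r) • G x := by
      intro x
      exact (integral_smul_const _ (G x)).symm
    simp only [heq]
    apply integral_integral_swap
    -- Integrability on the product
    have hA : MeasurableSet {p : α × ℝ | t p.1 < p.2} :=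
      measurableSet_lt (ht.comp measurable_fst) measurable_snd
    have hmeasp : AEStronglyMeasurable
        (Function.uncurry fun x r =>
          ({q : ℝ | t x < q}.indicator (fun r => s * Real.exp (-(s * r))) r) • G x)
        (ν.prod (volume.restrict (Set.Ioo 0 R))) := by
      have h1 : Measurable (fun p : α × ℝ =>
          {p : α × ℝ | t p.1 < p.2}.indicator (fun p => s * Real.exp (-(s * p.2))) p) :=
        Measurable.indicator (by fun_prop) hA
      have heqf : (Function.uncurry fun x r =>
          ({q : ℝ | t x < q}.indicator (fun r => s * Real.exp (-(s * r))) r) • G x)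
          = fun p : α × ℝ =>
            ({p : α × ℝ | t p.1 < p.2}.indicator (fun p => s * Real.exp (-(s * p.2))) p) • G p.1 := by
        funext p
        by_cases h : t p.1 < p.2 <;>
          simp [Function.uncurry, Set.indicator_apply, h]
      rw [heqf]
      exact h1.aestronglyMeasurable.smul
        ((hGm.comp_measurable measurable_fst).aestronglyMeasurable)
    refine Integrable.mono' (g := fun p : α × ℝ => ‖G p.1‖ * (s * Real.exp (-(s * p.2)))) ?_ hmeasp ?_
    · exact Integrable.mul_prod (hG.norm)
        (((continuous_const.mul (Real.continuous_exp.comp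
            (continuous_const.mul continuous_id).neg)).integrableOn_Icc (a := 0) (b := R)).mono_set
          Set.Ioo_subset_Icc_self)
    · filter_upwards with p
      show ‖({q : ℝ | t p.1 < q}.indicator (fun r => s * Real.exp (-(s * r))) p.2) • G p.1‖
        ≤ ‖G p.1‖ * (s * Real.exp (-(s * p.2)))
      rw [norm_smul, Real.norm_eq_abs]
      have hnn : 0 ≤ {q : ℝ | t p.1 < q}.indicator (fun r => s * Real.exp (-(s * r))) p.2 :=
        Set.indicator_nonneg (fun q _ => by positivity) _
      have hle : {q : ℝ | t p.1 < q}.indicator (fun r => s * Real.exp (-(s * r))) p.2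
          ≤ s * Real.exp (-(s * p.2)) :=
        Set.indicator_le_self' (fun q _ => by positivity) _
      rw [abs_of_nonneg hnn, mul_comm]
      exact mul_le_mul_of_nonneg_left hle (norm_nonneg _)
  rw [hswap]
  apply setIntegral_congr_fun measurableSet_Ioo
  intro r hr
  have hSr : MeasurableSet {x | t x < r} := measurableSet_lt ht measurable_const
  have hsub : {x | t x < r} ⊆ {x | t x < R} := fun x hx => lt_trans hx hr.2
  have heqind : ∀ x : α, ({q : ℝ | t x < q}.indicator (fun u => s * Real.exp (-(s * u))) r) • G x
      = {x : α | t x < r}.indicator (fun x => (s * Real.exp (-(s * r))) • G x) x := by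
    intro x
    by_cases h : t x < r <;> simp [Set.indicator_apply, h]
  calc ∫ x in {x | t x < R},
        ({q : ℝ | t x < q}.indicator (fun u => s * Real.exp (-(s * u))) r) • G x ∂μ
      = ∫ x in {x | t x < R},
          {x : α | t x < r}.indicator (fun x => (s * Real.exp (-(s * r))) • G x) x ∂μ := by
        exact integral_congr_ae (Filter.Eventually.of_forall (fun x => heqind x))
    _ = ∫ x in {x | t x < r}, (s * Real.exp (-(s * r))) • G x ∂ν := integral_indicator hSr
    _ = (s * Real.exp (-(s * r))) • ∫ x in {x | t x < r}, G x ∂μ := by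
        rw [hν, Measure.restrict_restrict hSr, Set.inter_eq_self_of_subset_left hsub,
          integral_smul]

theorem stmt_19 (d : ℕ) (hd : 1 ≤ d) {H : Type*}
    [NormedAddCommGroup H] [InnerProductSpace ℝ H] [CompleteSpace H]
    (F : EuclideanSpace ℂ (Fin d) → H) (hF : Continuous F)
    (hMVP : ∀ z ∈ Metric.ball (0 : EuclideanSpace ℂ (Fin d)) 1, ∀ r : ℝ, 0 < r →
      (hypMeasure d (bergBall z r)).toReal • F z =
        ∫ x in bergBall z r, F x ∂hypMeasure d)
    (hInt : ∀ s : ℝ, 0 < s → ∀ z ∈ Metric.ball (0 : EuclideanSpace ℂ (Fin d)) 1,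
      Integrable (fun x => Real.exp (-(s * bergDist z x)) * ‖F x‖) (hypMeasure d)) :
    ∀ s : ℝ, 0 < s → ∀ R : ℝ, 0 < R →
      ∀ z ∈ Metric.ball (0 : EuclideanSpace ℂ (Fin d)) 1,
        (∫ x in bergBall z R, Real.exp (-(s * bergDist z x)) • F x ∂hypMeasure d) =
          (∫ x in bergBall z R, Real.exp (-(s * bergDist z x)) ∂hypMeasure d) • F z := by
  intro s hs R hR z hz
  have hz1 : ‖z‖ < 1 := by rwa [mem_ball_zero_iff] at hz
  have ht : Measurable (bergDist z) := measurable_bergDist z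
  have ht0 : ∀ x, 0 ≤ bergDist z x := bergDist_nonneg z
  have hball : ∀ r : ℝ, bergBall z r = {x | bergDist z x < r} := fun _ => rfl
  have hfin : hypMeasure d {x | bergDist z x < R} ≠ ⊤ := by
    rw [← hball]
    exact hypMeasure_bergBall_ne_top z hz1 hR
  haveI : IsFiniteMeasure ((hypMeasure d).restrict {x | bergDist z x < R}) :=
    ⟨by rw [Measure.restrict_apply_univ]; exact lt_top_iff_ne_top.mpr hfin⟩
  have hFint : Integrable F ((hypMeasure d).restrict {x | bergDist z x < R}) := by
    have h0 := ((hInt s hs z hz).restrict (s := {x | bergDist z x < R})).const_mul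
      (Real.exp (s * R))
    refine Integrable.mono' h0 hF.aestronglyMeasurable ?_
    filter_upwards [ae_restrict_mem (measurableSet_lt ht measurable_const)] with x hx
    have hx' : bergDist z x < R := hx
    have h1 : 1 ≤ Real.exp (s * R) * Real.exp (-(s * bergDist z x)) := by
      rw [← Real.exp_add]
      refine Real.one_le_exp ?_
      nlinarith
    calc ‖F x‖ = 1 * ‖F x‖ := (one_mul _).symm
      _ ≤ (Real.exp (s * R) * Real.exp (-(s * bergDist z x))) * ‖F x‖ :=
          mul_le_mul_of_nonneg_right h1 (norm_nonneg _)
      _ = Real.exp (s * R) * (Real.exp (-(s * bergDist z x)) * ‖F x‖) := by ring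
  have eq1 := layer (hypMeasure d) (bergDist z) ht ht0 hs hR F hF.stronglyMeasurable
    hFint hfin
  have h1int : Integrable (fun _ : EuclideanSpace ℂ (Fin d) => (1 : ℝ))
      ((hypMeasure d).restrict {x | bergDist z x < R}) := integrable_const 1
  have eq2 := layer (hypMeasure d) (bergDist z) ht ht0 hs hR (fun _ => (1 : ℝ))
    stronglyMeasurable_const h1int hfin
  simp only [smul_eq_mul, mul_one, setIntegral_const] at eq2
  have hcong : ∀ r ∈ Set.Ioo (0:ℝ) R,
      (s * Real.exp (-(s * r))) • (∫ x in {x | bergDist z x < r}, F x ∂hypMeasure d)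
        = ((s * Real.exp (-(s * r))) * (hypMeasure d {x | bergDist z x < r}).toReal) • F z := by
    intro r hr
    have h := hMVP z hz r hr.1
    rw [hball r] at h
    rw [← h, smul_smul]
  rw [setIntegral_congr_fun measurableSet_Ioo hcong, integral_smul_const] at eq1
  have hMVPR := hMVP z hz R hR
  rw [hball R] at hMVPR
  rw [← hMVPR] at eq1
  rw [hball R]
  rw [eq1, eq2, add_smul, smul_smul]
  rfl
end
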